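/- arXiv:2402.03955 — 7 statements merged into one kernel-verified Lean document; each statement's English description precedes it below -/
import Mathlib

section
/- Let the linear system ẋ = Ax + Bu, y = Cx + Du be positive, i.e. A ∈ ℝ^{n×n} is Metzler and B ∈ ℝ^{n×m}, C ∈ ℝ^{p×n}, D ∈ ℝ^{p×m} are entrywise nonnegative. Let ξ ≥ 0 and assume A + ξI is Hurwitz, and let r ∈ ℝ^m and q ∈ ℝ^p be entrywise nonnegative. If there exist entrywise nonnegative vectors p, l ∈ ℝ^n and k ∈ ℝ^m satisfying p^⊤A + ξp^⊤ + q^⊤C + l^⊤ = 0 and p^⊤B + q^⊤D − r^⊤ + k^⊤ = 0, then r^⊤ − q^⊤G(−ξ) ≥ 0 componentwise, where G(−ξ) := C(−ξI − A)^{-1}B + D. -/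
open Matrix

noncomputable section

/-- A square real matrix is Metzler if all its off-diagonal entries are nonnegative. -/
def IsMetzler {n : ℕ} (A : Matrix (Fin n) (Fin n) ℝ) : Prop :=
  ∀ i j, i ≠ j → 0 ≤ A i j

/-- A square real matrix is Hurwitz if every (complex) eigenvalue has negative real part. -/
def IsHurwitz {n : ℕ} (A : Matrix (Fin n) (Fin n) ℝ) : Prop :=
  ∀ μ ∈ spectrum ℂ (A.map (fun a => (a : ℂ))), μ.re < 0

namespace Stmt0Aux

variable {n : ℕ}

lemma pow_entry_nonneg (E : Matrix (Fin n) (Fin n) ℝ) (hE : ∀ i j, 0 ≤ E i j) :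
    ∀ (k : ℕ) i j, 0 ≤ (E ^ k) i j := by
  intro k
  induction k with
  | zero =>
    intro i j
    simp only [pow_zero, Matrix.one_apply]
    split <;> norm_num
  | succ k ih =>
    intro i j
    rw [pow_succ, Matrix.mul_apply]
    exact Finset.sum_nonneg fun l _ => mul_nonneg (ih i l) (hE l j)

lemma pow_entry_le (E : Matrix (Fin n) (Fin n) ℝ) (hE : ∀ i j, 0 ≤ E i j)
    (c : ℝ) (hrow : ∀ i, ∑ j, E i j ≤ c) :
    ∀ (k : ℕ) i j, (E ^ k) i j ≤ c ^ k := by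
  intro k
  induction k with
  | zero =>
    intro i j
    simp only [pow_zero, Matrix.one_apply]
    split <;> norm_num
  | succ k ih =>
    intro i j
    have hc0 : 0 ≤ c := le_trans (Finset.sum_nonneg fun l _ => hE i l) (hrow i)
    rw [pow_succ', Matrix.mul_apply]
    calc ∑ l, E i l * (E ^ k) l j ≤ ∑ l, E i l * c ^ k := by
          refine Finset.sum_le_sum fun l _ => ?_
          exact mul_le_mul_of_nonneg_left (ih l j) (hE i l)
      _ = (∑ l, E i l) * c ^ k := by rw [← Finset.sum_mul]
      _ ≤ c * c ^ k := mul_le_mul_of_nonneg_right (hrow i) (pow_nonneg hc0 k)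
      _ = c ^ (k + 1) := (pow_succ' c k).symm

lemma neumann (E : Matrix (Fin n) (Fin n) ℝ) (hE : ∀ i j, 0 ≤ E i j)
    (c : ℝ) (hc : c < 1) (hrow : ∀ i, ∑ j, E i j ≤ c) :
    ∃ S : Matrix (Fin n) (Fin n) ℝ, (1 - E) * S = 1 ∧ ∀ i j, 0 ≤ S i j := by
  rcases Nat.eq_zero_or_pos n with hn | hn
  · subst hn
    exact ⟨1, Subsingleton.elim _ _, fun i j => i.elim0⟩
  have i0 : Fin n := ⟨0, hn⟩
  have hc0 : 0 ≤ c := le_trans (Finset.sum_nonneg fun l _ => hE i0 l) (hrow i0)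
  have hsum : ∀ i j, Summable (fun k : ℕ => (E ^ k) i j) := by
    intro i j
    refine Summable.of_nonneg_of_le (fun k => pow_entry_nonneg E hE k i j)
      (fun k => pow_entry_le E hE c hrow k i j) ?_
    exact summable_geometric_of_lt_one hc0 hc
  set S : Matrix (Fin n) (Fin n) ℝ := Matrix.of (fun i j => ∑' k, (E ^ k) i j) with hSdef
  have hSapp : ∀ i j, S i j = ∑' k, (E ^ k) i j := fun i j => rfl
  refine ⟨S, ?_, fun i j => by
    rw [hSapp]; exact tsum_nonneg fun k => pow_entry_nonneg E hE k i j⟩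
  ext i j
  have hES : (E * S) i j = ∑' k, (E ^ (k + 1)) i j := by
    rw [Matrix.mul_apply]
    have h1 : ∀ l, E i l * S l j = ∑' k, E i l * (E ^ k) l j := by
      intro l; rw [hSapp, tsum_mul_left]
    simp_rw [h1]
    rw [← Summable.tsum_finsetSum (fun l _ => (hsum l j).mul_left _)]
    congr 1
    ext k
    rw [← Matrix.mul_apply, ← pow_succ']
  have hshift : ∑' k, (E ^ k) i j = (E ^ 0) i j + ∑' k, (E ^ (k + 1)) i j :=
    Summable.tsum_eq_zero_add (hsum i j)
  have hsub : ((1 - E) * S) i j = S i j - (E * S) i j := by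
    rw [Matrix.sub_mul, Matrix.one_mul, Matrix.sub_apply]
  rw [hsub, hES, hSapp, hshift]
  simp

/-- Inverse positivity for Metzler matrices whose shifted versions are all nonsingular. -/
lemma inv_nonneg_of_metzler (N : Matrix (Fin n) (Fin n) ℝ)
    (hMetz : ∀ i j, i ≠ j → 0 ≤ N i j)
    (hdet : ∀ t : ℝ, 0 ≤ t → (t • (1 : Matrix (Fin n) (Fin n) ℝ) - N).det ≠ 0) :
    ∀ i j, 0 ≤ (-N)⁻¹ i j := by
  set M : ℝ → Matrix (Fin n) (Fin n) ℝ := fun t => t • 1 - N with hM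
  set a : ℝ := ∑ i, ∑ j, |N i j| with ha
  have ha0 : 0 ≤ a := Finset.sum_nonneg fun i _ => Finset.sum_nonneg fun j _ => abs_nonneg _
  have hrowabs : ∀ i, ∑ j, |N i j| ≤ a := fun i =>
    Finset.single_le_sum (f := fun i' => ∑ j', |N i' j'|)
      (fun i' _ => Finset.sum_nonneg fun j' _ => abs_nonneg _) (Finset.mem_univ i)
  have habs : ∀ i j, |N i j| ≤ a := by
    intro i j
    calc |N i j| ≤ ∑ j', |N i j'| :=
          Finset.single_le_sum (f := fun j' => |N i j'|)
            (fun j' _ => abs_nonneg _) (Finset.mem_univ j)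
      _ ≤ a := hrowabs i
  set T : ℝ := 1 + a with hT
  have hT0 : 0 ≤ T := by positivity
  -- base case : M T has nonnegative inverse
  have base : ∀ i j, 0 ≤ (M T)⁻¹ i j := by
    set s : ℝ := 2 + 2 * a with hs
    have hs0 : (0:ℝ) < s := by positivity
    set E : Matrix (Fin n) (Fin n) ℝ := 1 - s⁻¹ • M T with hEdef
    have hMT : M T = s • (1 - E) := by
      rw [hEdef, sub_sub_cancel, smul_smul, mul_inv_cancel₀ (ne_of_gt hs0), one_smul]
    have hEentry : ∀ i j, E i j = s⁻¹ * N i j + (if i = j then 1 - s⁻¹ * T else 0) := by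
      intro i j
      simp only [hEdef, hM, Matrix.sub_apply, Matrix.smul_apply, Matrix.one_apply,
        smul_eq_mul, mul_ite, mul_one, mul_zero]
      split <;> ring
    have hE : ∀ i j, 0 ≤ E i j := by
      intro i j
      rw [hEentry]
      by_cases hij : i = j
      · subst hij
        simp only [if_pos rfl, if_true, eq_self_iff_true]
        have h1 : T ≤ s + N i i := by
          have h2 := habs i i
          have h3 := neg_abs_le (N i i)
          simp only [hT, hs]; linarith
        have h4 : 0 ≤ s⁻¹ := (inv_nonneg).mpr hs0.le
        nlinarith [mul_nonneg h4 (sub_nonneg.mpr h1), inv_mul_cancel₀ (ne_of_gt hs0)]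
      · simp only [if_neg hij, add_zero]
        exact mul_nonneg ((inv_nonneg).mpr hs0.le) (hMetz i j hij)
    have hrow : ∀ i, ∑ j, E i j ≤ 1 - 1/s := by
      intro i
      have hsumrow : ∑ j, E i j = s⁻¹ * (∑ j, N i j) + (1 - s⁻¹ * T) := by
        rw [Finset.sum_congr rfl (fun j _ => hEentry i j), Finset.sum_add_distrib,
          ← Finset.mul_sum]
        congr 1
        simp [Finset.sum_ite_eq]
      rw [hsumrow]
      have hNrow : ∑ j, N i j ≤ a :=
        le_trans (Finset.sum_le_sum fun j _ => le_abs_self _) (hrowabs i)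
      have h4 : 0 ≤ s⁻¹ := (inv_nonneg).mpr hs0.le
      have h5 : s⁻¹ * (∑ j, N i j) ≤ s⁻¹ * a := mul_le_mul_of_nonneg_left hNrow h4
      have h6 : s⁻¹ * T = s⁻¹ * 1 + s⁻¹ * a := by rw [hT]; ring
      rw [one_div]
      linarith
    have hc : 1 - 1/s < 1 := by
      have : 0 < 1/s := by positivity
      linarith
    obtain ⟨S, hS1, hS2⟩ := neumann E hE _ hc hrow
    have hinv : M T * (s⁻¹ • S) = 1 := by
      rw [hMT, Matrix.smul_mul, Matrix.mul_smul, smul_smul, mul_inv_cancel₀ (ne_of_gt hs0),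
        one_smul, hS1]
    rw [Matrix.inv_eq_right_inv hinv]
    intro i j
    simp only [Matrix.smul_apply, smul_eq_mul]
    exact mul_nonneg ((inv_nonneg).mpr hs0.le) (hS2 i j)
  -- continuity and bounds on [0, T]
  have hMcont : Continuous M := by
    apply continuous_pi; intro i; apply continuous_pi; intro j
    simp only [hM, Matrix.sub_apply, Matrix.smul_apply, Matrix.one_apply, smul_eq_mul]
    exact (continuous_id.mul continuous_const).sub continuous_const
  have hdcont : Continuous fun t => |(M t).det| := hMcont.matrix_det.abs
  have hacont : Continuous fun t => ∑ i, ∑ j, |(M t).adjugate i j| := by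
    apply continuous_finset_sum; intro i _
    apply continuous_finset_sum; intro j _
    exact ((continuous_apply j).comp ((continuous_apply i).comp
      hMcont.matrix_adjugate)).abs
  have hcompact : IsCompact (Set.Icc (0:ℝ) T) := isCompact_Icc
  have hne : (Set.Icc (0:ℝ) T).Nonempty := ⟨0, le_refl 0, hT0⟩
  obtain ⟨t₀, ht₀, hmin⟩ := hcompact.exists_isMinOn hne hdcont.continuousOn
  obtain ⟨t₁, ht₁, hmax⟩ := hcompact.exists_isMaxOn hne hacont.continuousOn
  set δ : ℝ := |(M t₀).det| with hδ
  have hδ0 : 0 < δ := abs_pos.mpr (hdet t₀ ht₀.1)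
  set Cb : ℝ := ∑ i, ∑ j, |(M t₁).adjugate i j| with hCb
  have hCb0 : 0 ≤ Cb :=
    Finset.sum_nonneg fun i _ => Finset.sum_nonneg fun j _ => abs_nonneg _
  obtain ⟨K, hK0, hrowbound⟩ :
      ∃ K : ℝ, 0 ≤ K ∧ ∀ t ∈ Set.Icc (0:ℝ) T, ∀ i, ∑ j, (M t)⁻¹ i j ≤ K := by
    refine ⟨Cb / δ, div_nonneg hCb0 hδ0.le, ?_⟩
    intro t ht i
    have hinv_eq : (M t)⁻¹ = ((M t).det)⁻¹ • (M t).adjugate := by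
      rw [Matrix.inv_def, Ring.inverse_eq_inv']
    have hentry : ∀ j, (M t)⁻¹ i j ≤ δ⁻¹ * |(M t).adjugate i j| := by
      intro j
      rw [hinv_eq]
      simp only [Matrix.smul_apply, smul_eq_mul]
      calc ((M t).det)⁻¹ * (M t).adjugate i j ≤ |((M t).det)⁻¹ * (M t).adjugate i j| :=
            le_abs_self _
        _ = |(M t).det|⁻¹ * |(M t).adjugate i j| := by rw [abs_mul, abs_inv]
        _ ≤ δ⁻¹ * |(M t).adjugate i j| := by
            exact mul_le_mul_of_nonneg_right (inv_anti₀ hδ0 (hmin ht)) (abs_nonneg _)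
    calc ∑ j, (M t)⁻¹ i j ≤ ∑ j, δ⁻¹ * |(M t).adjugate i j| :=
          Finset.sum_le_sum fun j _ => hentry j
      _ = δ⁻¹ * ∑ j, |(M t).adjugate i j| := (Finset.mul_sum _ _ _).symm
      _ ≤ δ⁻¹ * ∑ i', ∑ j, |(M t).adjugate i' j| := by
          refine mul_le_mul_of_nonneg_left ?_ (inv_nonneg.mpr hδ0.le)
          exact Finset.single_le_sum (f := fun i' => ∑ j, |(M t).adjugate i' j|)
            (fun i' _ => Finset.sum_nonneg fun j _ => abs_nonneg _) (Finset.mem_univ i)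
      _ ≤ δ⁻¹ * Cb := mul_le_mul_of_nonneg_left (hmax ht) (inv_nonneg.mpr hδ0.le)
      _ = Cb / δ := by rw [div_eq_inv_mul]
  obtain ⟨ε, hε0, hεK⟩ : ∃ ε : ℝ, 0 < ε ∧ ε * K ≤ 1/2 := by
    refine ⟨1 / (2 * (K + 1)), by positivity, ?_⟩
    rw [div_mul_eq_mul_div, one_mul, div_le_div_iff₀ (by positivity) (by norm_num)]
    nlinarith
  -- step lemma
  have step : ∀ t t', 0 ≤ t → t ≤ t' → t' ≤ T → t' - t ≤ ε →
      (∀ i j, 0 ≤ (M t')⁻¹ i j) → ∀ i j, 0 ≤ (M t)⁻¹ i j := by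
    intro t t' ht htt' ht'T hdiff hpos
    have ht'mem : t' ∈ Set.Icc (0:ℝ) T := ⟨le_trans ht htt', ht'T⟩
    set E : Matrix (Fin n) (Fin n) ℝ := (t' - t) • (M t')⁻¹ with hEdef
    have hE : ∀ i j, 0 ≤ E i j := fun i j =>
      mul_nonneg (sub_nonneg.mpr htt') (hpos i j)
    have hrowE : ∀ i, ∑ j, E i j ≤ 1/2 := by
      intro i
      have hsum : ∑ j, E i j = (t' - t) * ∑ j, (M t')⁻¹ i j := by
        simp only [hEdef, Matrix.smul_apply, smul_eq_mul]
        exact (Finset.mul_sum _ _ _).symm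
      rw [hsum]
      have h1 : (t' - t) * ∑ j, (M t')⁻¹ i j ≤ ε * K :=
        mul_le_mul hdiff (hrowbound t' ht'mem i)
          (Finset.sum_nonneg fun j _ => hpos i j) hε0.le
      linarith [hεK]
    have hc : (1:ℝ)/2 < 1 := by norm_num
    obtain ⟨S, hS1, hS2⟩ := neumann E hE _ hc hrowE
    have hdet' : IsUnit (M t').det := isUnit_iff_ne_zero.mpr (hdet t' ht'mem.1)
    have hfact : M t = M t' * (1 - E) := by
      rw [Matrix.mul_sub, Matrix.mul_one, hEdef, Matrix.mul_smul,
        Matrix.mul_nonsing_inv _ hdet']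
      ext i j
      simp only [hM, Matrix.sub_apply, Matrix.smul_apply, Matrix.one_apply, smul_eq_mul,
        mul_ite, mul_one, mul_zero]
      split <;> ring
    have hinv : M t * (S * (M t')⁻¹) = 1 := by
      rw [hfact, Matrix.mul_assoc, ← Matrix.mul_assoc (1 - E), hS1, Matrix.one_mul,
        Matrix.mul_nonsing_inv _ hdet']
    rw [Matrix.inv_eq_right_inv hinv]
    intro i j
    rw [Matrix.mul_apply]
    exact Finset.sum_nonneg fun l _ => mul_nonneg (hS2 i l) (hpos l j)
  -- induction down from T
  have key : ∀ k : ℕ, ∀ t, 0 ≤ t → t ≤ T → T - t ≤ k * ε → ∀ i j, 0 ≤ (M t)⁻¹ i j := by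
    intro k
    induction k with
    | zero =>
      intro t ht htT hle
      simp only [Nat.cast_zero, zero_mul] at hle
      have : t = T := le_antisymm htT (by linarith)
      rw [this]; exact base
    | succ k ih =>
      intro t ht htT hle
      by_cases hcase : T - t ≤ k * ε
      · exact ih t ht htT hcase
      · push_neg at hcase
        set t' : ℝ := min T (t + ε) with ht'
        have htt' : t ≤ t' := le_min htT (by linarith)
        have ht'T : t' ≤ T := min_le_left _ _
        have hdiff : t' - t ≤ ε := by
          have : t' ≤ t + ε := min_le_right _ _
          linarith
        have hle' : T - t ≤ (k + 1 : ℝ) * ε := by push_cast at hle; linarith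
        have hT't : T - t' ≤ k * ε := by
          rcases min_cases T (t + ε) with ⟨h1, _⟩ | ⟨h1, _⟩
          · rw [ht', h1]; simp only [sub_self]; positivity
          · rw [ht', h1]; linarith
        exact step t t' ht htt' ht'T hdiff
          (ih t' (le_trans ht htt') ht'T hT't)
  obtain ⟨kk, hkk⟩ := exists_nat_ge (T / ε)
  have hfin : ∀ i j, 0 ≤ (M 0)⁻¹ i j := by
    apply key kk 0 le_rfl hT0
    rw [sub_zero]
    rw [div_le_iff₀ hε0] at hkk
    exact hkk
  have hM0 : M 0 = -N := by
    ext i j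
    simp [hM]
  rw [hM0] at hfin
  exact hfin

end Stmt0Aux

/-- linear dissipativity lemma, direction (i) ⟹ (ii). -/
theorem stmt0 {n m p : ℕ}
    (A : Matrix (Fin n) (Fin n) ℝ) (B : Matrix (Fin n) (Fin m) ℝ)
    (C : Matrix (Fin p) (Fin n) ℝ) (D : Matrix (Fin p) (Fin m) ℝ)
    (hA : IsMetzler A) (hB : ∀ i j, 0 ≤ B i j) (hC : ∀ i j, 0 ≤ C i j)
    (hD : ∀ i j, 0 ≤ D i j)
    (ξ : ℝ) (hξ : 0 ≤ ξ) (hHur : IsHurwitz (A + ξ • (1 : Matrix (Fin n) (Fin n) ℝ)))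
    (r : Fin m → ℝ) (q : Fin p → ℝ) (hr : ∀ i, 0 ≤ r i) (hq : ∀ i, 0 ≤ q i)
    (pv l : Fin n → ℝ) (k : Fin m → ℝ)
    (hpv : ∀ i, 0 ≤ pv i) (hl : ∀ i, 0 ≤ l i) (hk : ∀ i, 0 ≤ k i)
    (heq1 : ∀ j, vecMul pv A j + ξ * pv j + vecMul q C j + l j = 0)
    (heq2 : ∀ j, vecMul pv B j + vecMul q D j - r j + k j = 0) :
    ∀ j, 0 ≤ r j -
      vecMul q (C * (-(ξ • (1 : Matrix (Fin n) (Fin n) ℝ)) - A)⁻¹ * B + D) j := by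
  classical
  set N : Matrix (Fin n) (Fin n) ℝ := A + ξ • 1 with hN
  have hMetzN : ∀ i j, i ≠ j → 0 ≤ N i j := by
    intro i j hij
    simp only [hN, Matrix.add_apply, Matrix.smul_apply, Matrix.one_apply_ne hij,
      smul_eq_mul, mul_zero, add_zero]
    exact hA i j hij
  have hdet : ∀ t : ℝ, 0 ≤ t → (t • (1 : Matrix (Fin n) (Fin n) ℝ) - N).det ≠ 0 := by
    intro t ht hdet0
    have hmap : ((t • (1 : Matrix (Fin n) (Fin n) ℝ) - N).map (fun a => (a : ℂ)))
        = (t : ℂ) • (1 : Matrix (Fin n) (Fin n) ℂ) - N.map (fun a => (a : ℂ)) := by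
      ext i j
      simp only [Matrix.map_apply, Matrix.sub_apply, Matrix.smul_apply, Matrix.one_apply,
        smul_eq_mul]
      push_cast
      split <;> simp
    have hmm : (t • (1 : Matrix (Fin n) (Fin n) ℝ) - N).map (fun a => (a : ℂ))
        = Complex.ofRealHom.mapMatrix (t • (1 : Matrix (Fin n) (Fin n) ℝ) - N) := rfl
    have hdetC : ((t : ℂ) • (1 : Matrix (Fin n) (Fin n) ℂ)
        - N.map (fun a => (a : ℂ))).det = 0 := by
      rw [← hmap, hmm, ← RingHom.map_det, hdet0]
      simp
    have hnotunit : ¬ IsUnit ((t : ℂ) • (1 : Matrix (Fin n) (Fin n) ℂ)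
        - N.map (fun a => (a : ℂ))) := by
      rw [Matrix.isUnit_iff_isUnit_det, hdetC]
      exact fun h => by simpa using h.ne_zero
    have hspec : (t : ℂ) ∈ spectrum ℂ (N.map (fun a => (a : ℂ))) := by
      rw [spectrum.mem_iff]
      convert hnotunit using 2
      rw [Algebra.algebraMap_eq_smul_one]
    have := hHur (t : ℂ) hspec
    simp only [Complex.ofReal_re] at this
    linarith
  have hMinv := Stmt0Aux.inv_nonneg_of_metzler N hMetzN hdet
  have hMeq : -(ξ • (1 : Matrix (Fin n) (Fin n) ℝ)) - A = -N := by
    ext i j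
    simp only [hN, Matrix.sub_apply, Matrix.neg_apply, Matrix.add_apply]
    ring
  set Minv : Matrix (Fin n) (Fin n) ℝ := (-N)⁻¹ with hMinvdef
  have hMinvnn : ∀ i j, 0 ≤ Minv i j := hMinv
  have hdet0 : IsUnit (-N).det := by
    have h := hdet 0 le_rfl
    rw [zero_smul, zero_sub] at h
    exact isUnit_iff_ne_zero.mpr h
  have hMM : (-N) * Minv = 1 := Matrix.mul_nonsing_inv _ hdet0
  have hqC : vecMul q C = vecMul pv (-N) - l := by
    funext j
    have h1 := heq1 j
    have h2 : vecMul pv (-N) j = -(vecMul pv A j) - ξ * pv j := by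
      have h3 : vecMul pv (ξ • (1 : Matrix (Fin n) (Fin n) ℝ)) = ξ • pv := by
        funext jj
        show ∑ i, pv i * (ξ • (1 : Matrix (Fin n) (Fin n) ℝ)) i jj = (ξ • pv) jj
        simp [Matrix.smul_apply, Matrix.one_apply, mul_ite, mul_one, mul_zero,
          Finset.sum_ite_eq, Finset.sum_ite_eq', mul_comm]
      simp only [hN, Matrix.vecMul_neg, Matrix.vecMul_add, Pi.neg_apply, Pi.add_apply, h3,
        Pi.smul_apply, smul_eq_mul]
      ring
    simp only [Pi.sub_apply, h2]
    linarith
  intro j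
  rw [hMeq]
  have hsplit : vecMul q (C * Minv * B + D) j
      = vecMul (vecMul (vecMul q C) Minv) B j + vecMul q D j := by
    simp only [Matrix.vecMul_add, Pi.add_apply, Matrix.vecMul_vecMul, Matrix.mul_assoc]
  rw [hsplit]
  have hmid : vecMul (vecMul q C) Minv = pv - vecMul l Minv := by
    rw [hqC, Matrix.sub_vecMul, Matrix.vecMul_vecMul, hMM, Matrix.vecMul_one]
  rw [hmid, Matrix.sub_vecMul, Pi.sub_apply]
  have h2 := heq2 j
  have hlM : ∀ i, 0 ≤ vecMul l Minv i := by
    intro i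
    show 0 ≤ ∑ i', l i' * Minv i' i
    exact Finset.sum_nonneg fun i' _ => mul_nonneg (hl i') (hMinvnn i' i)
  have hlMB : 0 ≤ vecMul (vecMul l Minv) B j := by
    show 0 ≤ ∑ i, vecMul l Minv i * B i j
    exact Finset.sum_nonneg fun i _ => mul_nonneg (hlM i) (hB i j)
  linarith [h2, hlMB, hk j]
end
end

section
/- Let the linear system ẋ = Ax + Bu, y = Cx + Du be positive, i.e. A ∈ ℝ^{n×n} is Metzler and B ∈ ℝ^{n×m}, C ∈ ℝ^{p×n}, D ∈ ℝ^{p×m} are entrywise nonnegative. Let ξ ≥ 0 and assume A + ξI is Hurwitz, and let r ∈ ℝ^m and q ∈ ℝ^p be entrywise nonnegative. If r^⊤ − q^⊤G(−ξ) ≥ 0 componentwise, where G(−ξ) := C(−ξI − A)^{-1}B + D, then there exist entrywise nonnegative vectors p, l ∈ ℝ^n and k ∈ ℝ^m satisfying p^⊤A + ξp^⊤ + q^⊤C + l^⊤ = 0 and p^⊤B + q^⊤D − r^⊤ + k^⊤ = 0; indeed one may take p^⊤ := q^⊤C(−(A + ξI))^{-1}, l := 0 and k := r − G(−ξ)^⊤q.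 -/
/-!
The Metzler matrix `M := A + ξI` becomes entrywise nonnegative after adding `sI`, so for
large `t` the resolvent `(tI - M)⁻¹` is a Neumann series of nonnegative matrices. Lowering `t`
to `0` keeps it nonnegative by continuous induction, because `tI - M` stays invertible for
`t ≥ 0` (`M` is Hurwitz) and `(X - hI)⁻¹ = (1 - hX⁻¹)⁻¹X⁻¹` is nonnegative for small `h ≥ 0`
once `X⁻¹` is. Hence `(-M)⁻¹ ≥ 0`, so `p := (q⊤C(-M)⁻¹)⊤ ≥ 0`, and both identities are then
linear algebra.
-/

open Matrix

noncomputable section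

open Filter Topology Set

namespace Matrix

section Nonneg

variable {R l m n : Type*} [Fintype m] [Semiring R] [PartialOrder R] [IsOrderedRing R]

lemma mul_apply_nonneg {M : Matrix l m R} {N : Matrix m n R} (hM : ∀ i j, 0 ≤ M i j)
    (hN : ∀ i j, 0 ≤ N i j) (i : l) (k : n) : 0 ≤ (M * N) i k :=
  Finset.sum_nonneg fun j _ => mul_nonneg (hM i j) (hN j k)

lemma vecMul_apply_nonneg {v : m → R} {M : Matrix m n R} (hv : ∀ i, 0 ≤ v i)
    (hM : ∀ i j, 0 ≤ M i j) (j : n) : 0 ≤ (v ᵥ* M) j :=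
  Finset.sum_nonneg fun i _ => mul_nonneg (hv i) (hM i j)

end Nonneg

lemma isClosed_setOf_forall_apply_nonneg {m n : Type*} :
    IsClosed {X : Matrix m n ℝ | ∀ i j, 0 ≤ X i j} := by
  simp only [ofPred_forall]
  exact isClosed_iInter fun i => isClosed_iInter fun j =>
    isClosed_le continuous_const (continuous_id.matrix_elem i j)

variable {ι : Type*} [Fintype ι] [DecidableEq ι]

section Neumann

attribute [local instance] Matrix.linftyOpNormedRing Matrix.linftyOpNormedAlgebra

lemma inv_one_sub_apply_nonneg {N : Matrix ι ι ℝ} (hN : ∀ i j, 0 ≤ N i j) (hN1 : ‖N‖ < 1)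
    (i j : ι) : 0 ≤ (1 - N)⁻¹ i j := by
  have hsum : Summable (N ^ ·) := summable_geometric_of_norm_lt_one hN1
  rw [inv_eq_left_inv (geom_series_mul_neg N hN1)]
  exact (Pi.hasSum.1 (Pi.hasSum.1 hsum.hasSum i) j).nonneg fun k => pow_apply_nonneg hN k i j

lemma eventually_inv_one_sub_smul_apply_nonneg {N : Matrix ι ι ℝ} (hN : ∀ i j, 0 ≤ N i j) :
    ∀ᶠ c in 𝓝[≥] (0 : ℝ), ∀ i j, 0 ≤ (1 - c • N)⁻¹ i j := by
  have hsmall : ∀ᶠ c in 𝓝 (0 : ℝ), ‖c • N‖ < 1 := by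
    refine (continuous_id.smul continuous_const).norm.continuousAt.eventually_lt
      continuousAt_const ?_
    simp
  filter_upwards [nhdsWithin_le_nhds hsmall, self_mem_nhdsWithin] with c hc hc0
  exact inv_one_sub_apply_nonneg (fun i j => mul_nonneg hc0 (hN i j)) hc

end Neumann

lemma eventually_inv_sub_smul_one_apply_nonneg {X : Matrix ι ι ℝ} (hX : IsUnit X.det)
    (hXinv : ∀ i j, 0 ≤ X⁻¹ i j) :
    ∀ᶠ h in 𝓝[≥] (0 : ℝ), ∀ i j, 0 ≤ (X - h • 1)⁻¹ i j := by
  filter_upwards [eventually_inv_one_sub_smul_apply_nonneg hXinv] with h hh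
  have hfactor : X - h • 1 = X * (1 - h • X⁻¹) := by
    rw [mul_sub, mul_one, Matrix.mul_smul, mul_nonsing_inv X hX]
  rw [hfactor, mul_inv_rev]
  exact mul_apply_nonneg hh hXinv

lemma exists_add_smul_one_apply_nonneg {M : Matrix ι ι ℝ} (hM : ∀ i j, i ≠ j → 0 ≤ M i j) :
    ∃ s : ℝ, 0 ≤ s ∧ ∀ i j, 0 ≤ (M + s • 1) i j := by
  refine ⟨∑ i, |M i i|, Finset.sum_nonneg fun i _ => abs_nonneg _, fun i j => ?_⟩
  rcases eq_or_ne i j with rfl | hij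
  · have hle : |M i i| ≤ ∑ i, |M i i| :=
      Finset.single_le_sum (f := fun i => |M i i|) (fun i _ => abs_nonneg _) (Finset.mem_univ i)
    simp only [add_apply, smul_apply, one_apply_eq, smul_eq_mul, mul_one]
    linarith [neg_abs_le (M i i)]
  · simpa [one_apply_ne hij] using hM i j hij

lemma eventually_inv_smul_one_sub_apply_nonneg {M : Matrix ι ι ℝ}
    (hM : ∀ i j, i ≠ j → 0 ≤ M i j) :
    ∀ᶠ t : ℝ in atTop, ∀ i j, 0 ≤ (t • (1 : Matrix ι ι ℝ) - M)⁻¹ i j := by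
  obtain ⟨s, hs, hP⟩ := exists_add_smul_one_apply_nonneg hM
  have hlim : Tendsto (fun t : ℝ => (t + s)⁻¹) atTop (𝓝[≥] 0) :=
    tendsto_nhdsWithin_mono_right Ioi_subset_Ici_self
      (tendsto_inv_atTop_nhdsGT_zero.comp (tendsto_atTop_add_const_right _ s tendsto_id))
  filter_upwards [hlim.eventually (eventually_inv_one_sub_smul_apply_nonneg hP),
    eventually_gt_atTop 0] with t ht htpos
  have hts : t + s ≠ 0 := by positivity
  have hfactor : t • (1 : Matrix ι ι ℝ) - M =
      ((t + s) • 1 : Matrix ι ι ℝ) * (1 - (t + s)⁻¹ • (M + s • 1)) := by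
    rw [mul_sub, mul_one, smul_mul_smul, one_mul, mul_inv_cancel₀ hts, one_smul, add_smul]
    abel
  have hscalar : ((t + s) • 1 : Matrix ι ι ℝ)⁻¹ = (t + s)⁻¹ • 1 :=
    inv_eq_left_inv (by rw [smul_mul_smul, one_mul, inv_mul_cancel₀ hts, one_smul])
  rw [hfactor, mul_inv_rev, hscalar]
  refine mul_apply_nonneg ht fun i j => ?_
  rw [smul_apply, one_apply]
  split_ifs <;> simp [add_nonneg htpos.le hs]

lemma continuousAt_inv_smul_one_sub {M : Matrix ι ι ℝ} {t : ℝ}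
    (ht : IsUnit (t • (1 : Matrix ι ι ℝ) - M).det) :
    ContinuousAt (fun u : ℝ => (u • (1 : Matrix ι ι ℝ) - M)⁻¹) t := by
  refine ContinuousAt.comp (g := Inv.inv) (continuousAt_matrix_inv _ ?_) (by fun_prop)
  rw [Ring.inverse_eq_inv']
  exact continuousAt_inv₀ ht.ne_zero

theorem inv_smul_one_sub_apply_nonneg {M : Matrix ι ι ℝ} (hM : ∀ i j, i ≠ j → 0 ≤ M i j)
    (hdet : ∀ t : ℝ, 0 ≤ t → IsUnit (t • (1 : Matrix ι ι ℝ) - M).det) {t : ℝ} (ht : 0 ≤ t) :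
    ∀ i j, 0 ≤ (t • (1 : Matrix ι ι ℝ) - M)⁻¹ i j := by
  set R := fun u : ℝ => (u • (1 : Matrix ι ι ℝ) - M)⁻¹
  obtain ⟨T, hT, htT⟩ :=
    ((eventually_inv_smul_one_sub_apply_nonneg hM).and (eventually_ge_atTop t)).exists
  have hclosed : IsClosed (R ⁻¹' {X | ∀ i j, 0 ≤ X i j} ∩ Icc t T) := by
    rw [inter_comm]
    refine ContinuousOn.preimage_isClosed_of_isClosed (fun u hu => ?_) isClosed_Icc
      isClosed_setOf_forall_apply_nonneg
    exact (continuousAt_inv_smul_one_sub (hdet u (ht.trans hu.1))).continuousWithinAt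
  refine hclosed.mem_of_ge_of_forall_exists_lt hT htT fun u ⟨hu, htu, huT⟩ => ?_
  have hstep := eventually_inv_sub_smul_one_apply_nonneg (hdet u (ht.trans htu.le)) hu
  obtain ⟨h, hh, hpos, hlt⟩ :=
    (Eventually.and (nhdsWithin_mono _ Ioi_subset_Ici_self hstep)
      (Ioo_mem_nhdsGT (sub_pos.2 htu))).exists
  refine ⟨u - h, ?_, by linarith, by linarith⟩
  have hshift : (u - h) • (1 : Matrix ι ι ℝ) - M = u • 1 - M - h • 1 := by
    rw [sub_smul, sub_right_comm]
  simpa only [R, mem_preimage, mem_ofPred_eq, hshift] using hh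

end Matrix

lemma IsMetzler.add_smul_one {n : ℕ} {A : Matrix (Fin n) (Fin n) ℝ} (hA : IsMetzler A) (ξ : ℝ) :
    IsMetzler (A + ξ • (1 : Matrix (Fin n) (Fin n) ℝ)) := fun i j hij => by
  simpa [one_apply_ne hij] using hA i j hij

lemma IsHurwitz.isUnit_det_smul_one_sub {n : ℕ} {M : Matrix (Fin n) (Fin n) ℝ}
    (hM : IsHurwitz M) {t : ℝ} (ht : 0 ≤ t) :
    IsUnit (t • (1 : Matrix (Fin n) (Fin n) ℝ) - M).det := by
  by_contra hsing
  have hmap : (t • (1 : Matrix (Fin n) (Fin n) ℝ) - M).map (fun a => (a : ℂ)) =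
      algebraMap ℂ _ (t : ℂ) - M.map (fun a => (a : ℂ)) := by
    ext i j
    rcases eq_or_ne i j with rfl | hij <;> simp [algebraMap_matrix_apply, one_apply, *]
  have hdet : ((t • (1 : Matrix (Fin n) (Fin n) ℝ) - M).map (fun a => (a : ℂ))).det =
      ((t • (1 : Matrix (Fin n) (Fin n) ℝ) - M).det : ℂ) :=
    ((algebraMap ℝ ℂ).map_det _).symm
  have hspec : (t : ℂ) ∈ spectrum ℂ (M.map (fun a => (a : ℂ))) := by
    rw [spectrum.mem_iff, ← hmap, isUnit_iff_isUnit_det, hdet]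
    simpa [isUnit_iff_ne_zero] using hsing
  simpa using (hM _ hspec).trans_le ht

theorem stmt1_general {n m p : ℕ}
    (A : Matrix (Fin n) (Fin n) ℝ) (B : Matrix (Fin n) (Fin m) ℝ)
    (C : Matrix (Fin p) (Fin n) ℝ) (D : Matrix (Fin p) (Fin m) ℝ)
    (hA : IsMetzler A) (hC : ∀ i j, 0 ≤ C i j)
    (ξ : ℝ) (hHur : IsHurwitz (A + ξ • (1 : Matrix (Fin n) (Fin n) ℝ)))
    (r : Fin m → ℝ) (q : Fin p → ℝ) (hq : ∀ i, 0 ≤ q i)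
    (hrq : ∀ j, 0 ≤ r j -
      vecMul q (C * (-(ξ • (1 : Matrix (Fin n) (Fin n) ℝ)) - A)⁻¹ * B + D) j) :
    (∃ pv l : Fin n → ℝ, ∃ k : Fin m → ℝ,
      (∀ i, 0 ≤ pv i) ∧ (∀ i, 0 ≤ l i) ∧ (∀ i, 0 ≤ k i) ∧
      (∀ j, vecMul pv A j + ξ * pv j + vecMul q C j + l j = 0) ∧
      (∀ j, vecMul pv B j + vecMul q D j - r j + k j = 0)) ∧
    (∀ i, 0 ≤ vecMul q (C * (-(A + ξ • (1 : Matrix (Fin n) (Fin n) ℝ)))⁻¹) i) ∧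
    (∀ j, 0 ≤ r j -
        vecMul q (C * (-(ξ • (1 : Matrix (Fin n) (Fin n) ℝ)) - A)⁻¹ * B + D) j) ∧
    (∀ j, vecMul (vecMul q (C * (-(A + ξ • (1 : Matrix (Fin n) (Fin n) ℝ)))⁻¹)) A j +
        ξ * vecMul q (C * (-(A + ξ • (1 : Matrix (Fin n) (Fin n) ℝ)))⁻¹) j +
        vecMul q C j + (0 : Fin n → ℝ) j = 0) ∧
    (∀ j, vecMul (vecMul q (C * (-(A + ξ • (1 : Matrix (Fin n) (Fin n) ℝ)))⁻¹)) B j +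
        vecMul q D j - r j +
        (r j - vecMul q (C * (-(ξ • (1 : Matrix (Fin n) (Fin n) ℝ)) - A)⁻¹ * B + D) j) = 0) := by
  set M := A + ξ • (1 : Matrix (Fin n) (Fin n) ℝ)
  have hdet : IsUnit (-M).det := by
    simpa only [zero_smul, zero_sub] using hHur.isUnit_det_smul_one_sub le_rfl
  have hinv : ∀ i j, 0 ≤ (-M)⁻¹ i j := by
    simpa only [zero_smul, zero_sub] using inv_smul_one_sub_apply_nonneg (hA.add_smul_one ξ)
      (fun t ht => hHur.isUnit_det_smul_one_sub ht) le_rfl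
  set pv := q ᵥ* (C * (-M)⁻¹)
  have hpv : ∀ i, 0 ≤ pv i := vecMul_apply_nonneg hq (mul_apply_nonneg hC hinv)
  have hpvM : pv ᵥ* M = -(q ᵥ* C) := by
    have hinvM : (-M)⁻¹ * M = -1 := by
      rw [← neg_eq_iff_eq_neg, ← Matrix.mul_neg, nonsing_inv_mul _ hdet]
    rw [vecMul_vecMul, Matrix.mul_assoc, hinvM, Matrix.mul_neg, Matrix.mul_one, vecMul_neg]
  have hAeq : ∀ j, (pv ᵥ* A) j + ξ * pv j + (q ᵥ* C) j + (0 : Fin n → ℝ) j = 0 := fun j => by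
    have := congrFun hpvM j
    simp only [M, vecMul_add, vecMul_smul, vecMul_one, Pi.add_apply, Pi.smul_apply,
      Pi.neg_apply, smul_eq_mul] at this
    simp only [Pi.zero_apply]
    linarith
  have hneg : -(ξ • (1 : Matrix (Fin n) (Fin n) ℝ)) - A = -M := by simp only [M]; abel
  have hBeq : ∀ j, (pv ᵥ* B) j + (q ᵥ* D) j - r j +
      (r j - (q ᵥ* (C * (-(ξ • (1 : Matrix (Fin n) (Fin n) ℝ)) - A)⁻¹ * B + D)) j) = 0 :=
    fun j => by
      rw [hneg, vecMul_add, ← vecMul_vecMul]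
      simp only [Pi.add_apply]
      ring
  exact ⟨⟨pv, 0, _, hpv, fun _ => le_rfl, hrq, hAeq, hBeq⟩, hpv, hrq, hAeq, hBeq⟩

/-- linear dissipativity lemma, direction (ii) ⟹ (i), with the explicit choice
`p⊤ := q⊤ C (−(A+ξI))⁻¹`, `l := 0`, `k := r − G(−ξ)⊤ q`. -/
theorem stmt1 {n m p : ℕ}
    (A : Matrix (Fin n) (Fin n) ℝ) (B : Matrix (Fin n) (Fin m) ℝ)
    (C : Matrix (Fin p) (Fin n) ℝ) (D : Matrix (Fin p) (Fin m) ℝ)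
    (hA : IsMetzler A) (hB : ∀ i j, 0 ≤ B i j) (hC : ∀ i j, 0 ≤ C i j)
    (hD : ∀ i j, 0 ≤ D i j)
    (ξ : ℝ) (hξ : 0 ≤ ξ) (hHur : IsHurwitz (A + ξ • (1 : Matrix (Fin n) (Fin n) ℝ)))
    (r : Fin m → ℝ) (q : Fin p → ℝ) (hr : ∀ i, 0 ≤ r i) (hq : ∀ i, 0 ≤ q i)
    (hrq : ∀ j, 0 ≤ r j -
      vecMul q (C * (-(ξ • (1 : Matrix (Fin n) (Fin n) ℝ)) - A)⁻¹ * B + D) j) :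
    (∃ pv l : Fin n → ℝ, ∃ k : Fin m → ℝ,
      (∀ i, 0 ≤ pv i) ∧ (∀ i, 0 ≤ l i) ∧ (∀ i, 0 ≤ k i) ∧
      (∀ j, vecMul pv A j + ξ * pv j + vecMul q C j + l j = 0) ∧
      (∀ j, vecMul pv B j + vecMul q D j - r j + k j = 0)) ∧
    (∀ i, 0 ≤ vecMul q (C * (-(A + ξ • (1 : Matrix (Fin n) (Fin n) ℝ)))⁻¹) i) ∧
    (∀ j, 0 ≤ r j -
        vecMul q (C * (-(ξ • (1 : Matrix (Fin n) (Fin n) ℝ)) - A)⁻¹ * B + D) j) ∧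
    (∀ j, vecMul (vecMul q (C * (-(A + ξ • (1 : Matrix (Fin n) (Fin n) ℝ)))⁻¹)) A j +
        ξ * vecMul q (C * (-(A + ξ • (1 : Matrix (Fin n) (Fin n) ℝ)))⁻¹) j +
        vecMul q C j + (0 : Fin n → ℝ) j = 0) ∧
    (∀ j, vecMul (vecMul q (C * (-(A + ξ • (1 : Matrix (Fin n) (Fin n) ℝ)))⁻¹)) B j +
        vecMul q D j - r j +
        (r j - vecMul q (C * (-(ξ • (1 : Matrix (Fin n) (Fin n) ℝ)) - A)⁻¹ * B + D) j) = 0) :=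
  stmt1_general A B C D hA hC ξ hHur r q hq hrq
end
end

section
/- Let the linear system ẋ = Ax + Bu, y = Cx + Du be positive, i.e. A ∈ ℝ^{n×n} is Metzler and B ∈ ℝ^{n×m}, C ∈ ℝ^{p×n}, D ∈ ℝ^{p×m} are entrywise nonnegative. Let ξ ≥ 0, assume A + ξI is Hurwitz, and let r ∈ ℝ^m and q ∈ ℝ^p be entrywise nonnegative. Suppose p, l ∈ ℝ^n and k ∈ ℝ^m are entrywise nonnegative and satisfy p^⊤A + ξp^⊤ + q^⊤C + l^⊤ = 0 and p^⊤B + q^⊤D − r^⊤ + k^⊤ = 0. If in addition every entry of the row vector q^⊤C(−A)^{-1} is strictly positive, then every entry of p is strictly positive. (Here A is Hurwitz, hence invertible, since A is Metzler and A + ξI is Hurwitz.) -/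
open Matrix

noncomputable section

/-- if in addition every entry of `q⊤ C (−A)⁻¹` is strictly positive,
then every entry of `p` is strictly positive. -/
theorem stmt2 {n m p : ℕ}
    (A : Matrix (Fin n) (Fin n) ℝ) (B : Matrix (Fin n) (Fin m) ℝ)
    (C : Matrix (Fin p) (Fin n) ℝ) (D : Matrix (Fin p) (Fin m) ℝ)
    (hA : IsMetzler A) (hB : ∀ i j, 0 ≤ B i j) (hC : ∀ i j, 0 ≤ C i j)
    (hD : ∀ i j, 0 ≤ D i j)
    (ξ : ℝ) (hξ : 0 ≤ ξ) (hHur : IsHurwitz (A + ξ • (1 : Matrix (Fin n) (Fin n) ℝ)))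
    (r : Fin m → ℝ) (q : Fin p → ℝ) (hr : ∀ i, 0 ≤ r i) (hq : ∀ i, 0 ≤ q i)
    (pv l : Fin n → ℝ) (k : Fin m → ℝ)
    (hpv : ∀ i, 0 ≤ pv i) (hl : ∀ i, 0 ≤ l i) (hk : ∀ i, 0 ≤ k i)
    (heq1 : ∀ j, vecMul pv A j + ξ * pv j + vecMul q C j + l j = 0)
    (heq2 : ∀ j, vecMul pv B j + vecMul q D j - r j + k j = 0)
    (hobs : ∀ i, 0 < vecMul q (C * (-A)⁻¹) i) :
    ∀ i, 0 < pv i := by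
  intro i
  by_contra hi0
  have hpi : pv i = 0 := le_antisymm (not_lt.mp hi0) (hpv i)
  -- Step 1: at any index j with pv j = 0, `(qᵀC) j = 0` and `A k j = 0` for all k with pv k ≠ 0.
  have key : ∀ j, pv j = 0 → (vecMul q C j = 0 ∧ ∀ k', pv k' ≠ 0 → A k' j = 0) := by
    intro j hj
    have h1 := heq1 j
    rw [hj, mul_zero] at h1
    have hvm : vecMul pv A j = ∑ k', pv k' * A k' j := by
      simp [vecMul, dotProduct]
    have hterm : ∀ k' : Fin n, 0 ≤ pv k' * A k' j := by
      intro k'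
      rcases eq_or_ne k' j with rfl | hne
      · rw [hj, zero_mul]
      · exact mul_nonneg (hpv k') (hA k' j hne)
    have hsum0 : 0 ≤ vecMul pv A j := by
      rw [hvm]; exact Finset.sum_nonneg fun k' _ => hterm k'
    have hqC0 : 0 ≤ vecMul q C j := by
      have : vecMul q C j = ∑ k', q k' * C k' j := by simp [vecMul, dotProduct]
      rw [this]; exact Finset.sum_nonneg fun k' _ => mul_nonneg (hq k') (hC k' j)
    have hqC : vecMul q C j = 0 := by linarith [hl j]
    have hA0 : vecMul pv A j = 0 := by linarith [hl j]
    refine ⟨hqC, fun k' hk' => ?_⟩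
    have := (Finset.sum_eq_zero_iff_of_nonneg (fun k' _ => hterm k')).mp
      (hvm ▸ hA0) k' (Finset.mem_univ k')
    rcases mul_eq_zero.mp this with h | h
    · exact absurd h hk'
    · exact h
  -- Step 2: (-A) is invertible (else hobs is contradicted).
  have hdet : IsUnit (-A).det := by
    by_contra h
    have hz : (-A)⁻¹ = 0 := Matrix.nonsing_inv_apply_not_isUnit _ h
    have := hobs i
    rw [hz, Matrix.mul_zero] at this
    simp at this
  have : Invertible (-A) := (-A).invertibleOfIsUnitDet hdet
  have hinj : Function.Injective ((-A).mulVec) := Matrix.mulVec_injective_of_invertible (-A)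
  -- Step 3: the submodule of vectors supported on {j | pv j = 0}.
  let W : Submodule ℝ (Fin n → ℝ) :=
    { carrier := {x | ∀ k', pv k' ≠ 0 → x k' = 0}
      add_mem' := fun ha hb k' hk' => by
        simp only [Pi.add_apply, ha k' hk', hb k' hk', add_zero]
      zero_mem' := fun k' _ => rfl
      smul_mem' := fun c x hx k' hk' => by
        simp only [Pi.smul_apply, hx k' hk', smul_zero] }
  have hmapW : ∀ x ∈ W, (-A).mulVecLin x ∈ W := by
    intro x hx k' hk'
    show ((-A).mulVec x) k' = 0
    show ∑ j, (-A) k' j * x j = 0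
    apply Finset.sum_eq_zero
    intro j _
    rcases eq_or_ne (pv j) 0 with hj | hj
    · rw [show (-A) k' j = -(A k' j) from rfl, (key j hj).2 k' hk', neg_zero, zero_mul]
    · rw [hx j hj, mul_zero]
  -- restrict to W, injective, hence surjective
  let g : W →ₗ[ℝ] W := ((-A).mulVecLin).restrict hmapW
  have hginj : Function.Injective g := by
    intro a b hab
    apply Subtype.ext
    apply hinj
    exact congrArg Subtype.val hab
  have hgsurj : Function.Surjective g := LinearMap.injective_iff_surjective.mp hginj
  -- the basis vector e_i lies in W
  have hei : (Pi.single i 1 : Fin n → ℝ) ∈ W := by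
    intro k' hk'
    have hne : k' ≠ i := fun h => hk' (by rw [h]; exact hpi)
    exact Pi.single_eq_of_ne hne 1
  obtain ⟨⟨w, hwW⟩, hw⟩ := hgsurj ⟨Pi.single i 1, hei⟩
  have hw' : (-A).mulVec w = Pi.single i 1 := congrArg Subtype.val hw
  -- hence the i-th column of (-A)⁻¹ vanishes at every k' with pv k' ≠ 0
  have hMcol : ∀ k', pv k' ≠ 0 → (-A)⁻¹ k' i = 0 := by
    intro k' hk'
    have h1 : (-A).mulVec ((-A)⁻¹.mulVec (Pi.single i 1)) = Pi.single i 1 := by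
      rw [Matrix.mulVec_mulVec, Matrix.mul_nonsing_inv _ hdet, Matrix.one_mulVec]
    have h2 : (-A)⁻¹.mulVec (Pi.single i 1) = w := hinj (h1.trans hw'.symm)
    have h3 := congrFun h2 k'
    rw [Matrix.mulVec_single] at h3
    simpa [hwW k' hk'] using h3
  -- Step 4: contradict hobs at i
  have hzero : vecMul q (C * (-A)⁻¹) i = 0 := by
    rw [← Matrix.vecMul_vecMul]
    show ∑ k', vecMul q C k' * (-A)⁻¹ k' i = 0
    apply Finset.sum_eq_zero
    intro k' _
    rcases eq_or_ne (pv k') 0 with hk' | hk'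
    · rw [(key k' hk').1, zero_mul]
    · rw [hMcol k' hk', mul_zero]
  exact absurd (hobs i) (by rw [hzero]; exact lt_irrefl 0)
end
end

section
/- Let A ∈ ℝ^{n×n} be Metzler, let B₁ ∈ ℝ^{n×m₁} and C₁ ∈ ℝ^{p₁×n} be entrywise nonnegative, and fix an entrywise nonnegative Δ ∈ ℝ^{m₁×p₁}. Then the following are equivalent: (i) there exist ξ > 0 and a strictly positive vector p ∈ ℝ^n such that p^⊤(A + B₁ΔC₁) ≤ −ξp^⊤ componentwise; (ii) the matrix A + B₁ΣC₁ is Hurwitz for every Σ ∈ ℝ^{m₁×p₁} with 0 ≤ Σ ≤ Δ componentwise. -/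
open Matrix

noncomputable section

/-!
For a Metzler matrix `K`, being Hurwitz is equivalent to the existence of a strictly positive `p`
with `pᵀK < 0`. Sufficiency is Gershgorin's theorem for the columns of `K`, weighted by `p`.
For necessity, write `K = N - s` with `N ≥ 0`; since no `t ≥ 0` is an eigenvalue of `K`, the
resolvent `(t - K)⁻¹` exists for all `t ≥ 0`, is entrywise nonnegative for large `t` by the Neumann
series, and stays so down to `t = 0` by a continuity argument; `pᵀ = 1ᵀ(-K)⁻¹` then works.
The theorem follows because `A + B₁ΣC₁` is Metzler and increases entrywise with `Σ ≥ 0`.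
-/

open scoped Ring

attribute [local instance] Matrix.linftyOpNormedRing Matrix.linftyOpNormedAlgebra

namespace Matrix

section Nonneg

variable {ι κ ν : Type*}

theorem mul_entry_nonneg [Fintype κ] {A : Matrix ι κ ℝ} {B : Matrix κ ν ℝ}
    (hA : ∀ i j, 0 ≤ A i j) (hB : ∀ i j, 0 ≤ B i j) (i : ι) (j : ν) : 0 ≤ (A * B) i j :=
  Finset.sum_nonneg fun k _ => mul_nonneg (hA i k) (hB k j)

theorem mul_mul_entry_mono {μ : Type*} [Fintype κ] [Fintype ν] {B : Matrix ι κ ℝ}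
    {C : Matrix ν μ ℝ} (hB : ∀ i j, 0 ≤ B i j) (hC : ∀ i j, 0 ≤ C i j) {S S' : Matrix κ ν ℝ}
    (hS : ∀ i j, S i j ≤ S' i j) (i : ι) (j : μ) : (B * S * C) i j ≤ (B * S' * C) i j := by
  have := mul_entry_nonneg (mul_entry_nonneg (B := S' - S) hB fun k l => sub_nonneg.2 (hS k l))
    hC i j
  rwa [Matrix.mul_sub, Matrix.sub_mul, sub_apply, sub_nonneg] at this

theorem vecMul_le_vecMul_of_entry_le [Fintype ι] {p : ι → ℝ} (hp : ∀ i, 0 ≤ p i)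
    {M M' : Matrix ι κ ℝ} (hM : ∀ i j, M i j ≤ M' i j) (j : κ) : vecMul p M j ≤ vecMul p M' j :=
  Finset.sum_le_sum fun i _ => mul_le_mul_of_nonneg_left (hM i j) (hp i)

theorem isClosed_setOf_entry_nonneg : IsClosed {M : Matrix ι κ ℝ | ∀ i j, 0 ≤ M i j} := by
  simp only [Set.ofPred_forall]
  exact isClosed_iInter fun i => isClosed_iInter fun j =>
    isClosed_le continuous_const (continuous_id.matrix_elem i j)

variable [Fintype ι] [DecidableEq ι]

theorem pow_entry_nonneg {A : Matrix ι ι ℝ} (hA : ∀ i j, 0 ≤ A i j) (k : ℕ) (i j : ι) :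
    0 ≤ (A ^ k) i j := by
  induction k generalizing i j with
  | zero => by_cases h : i = j <;> simp [h]
  | succ k ih => rw [pow_succ]; exact mul_entry_nonneg ih hA i j

theorem algebraMap_entry_nonneg {r : ℝ} (hr : 0 ≤ r) (i j : ι) :
    0 ≤ (algebraMap ℝ (Matrix ι ι ℝ) r) i j := by
  rw [algebraMap_matrix_apply]
  split_ifs <;> simp [hr]

theorem inverse_algebraMap {r : ℝ} (hr : r ≠ 0) :
    (algebraMap ℝ (Matrix ι ι ℝ) r)⁻¹ʳ = algebraMap ℝ (Matrix ι ι ℝ) r⁻¹ :=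
  Ring.inverse_unit ⟨_, _, by rw [← map_mul, mul_inv_cancel₀ hr, map_one],
    by rw [← map_mul, inv_mul_cancel₀ hr, map_one]⟩

theorem vecMul_one_pos_of_entry_nonneg {P : Matrix ι ι ℝ} (hP : ∀ i j, 0 ≤ P i j)
    (hunit : IsUnit P) (j : ι) : 0 < vecMul 1 P j := by
  have hsum : vecMul 1 P j = ∑ i, P i j := by simp [vecMul, dotProduct]
  rw [hsum]
  refine lt_of_le_of_ne (Finset.sum_nonneg fun i _ => hP i j) fun hzero => ?_
  have hcol : ∀ l, P l j = 0 := fun l =>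
    (Finset.sum_eq_zero_iff_of_nonneg fun i _ => hP i j).1 hzero.symm l (Finset.mem_univ l)
  have hdiag : (P⁻¹ʳ * P) j j = 1 := by rw [Ring.inverse_mul_cancel _ hunit, one_apply_eq]
  simp [mul_apply, hcol] at hdiag

theorem inverse_one_sub_entry_nonneg {T : Matrix ι ι ℝ} (hT : ∀ i j, 0 ≤ T i j)
    (h : ‖T‖ < 1) (i j : ι) : 0 ≤ (1 - T)⁻¹ʳ i j :=
  (Pi.hasSum.1 (Pi.hasSum.1 (hasSum_geom_series_inverse T h) i) j).nonneg
    fun k => pow_entry_nonneg hT k i j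

theorem inverse_sub_entry_nonneg {M E : Matrix ι ι ℝ} (hM : IsUnit M)
    (hMinv : ∀ i j, 0 ≤ M⁻¹ʳ i j) (hE : ∀ i j, 0 ≤ E i j) (hsmall : ‖M⁻¹ʳ * E‖ < 1)
    (i j : ι) : 0 ≤ (M - E)⁻¹ʳ i j := by
  have hfactor : M - E = M * (1 - M⁻¹ʳ * E) := by
    rw [mul_sub, mul_one, Ring.mul_inverse_cancel_left M E hM]
  rw [hfactor, Ring.inverse_mul (Or.inl hM)]
  exact mul_entry_nonneg (inverse_one_sub_entry_nonneg (mul_entry_nonneg hMinv hE) hsmall)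
    hMinv i j

/-- Lowering `t` by less than `‖(t - N)⁻¹‖⁻¹` keeps the resolvent nonnegative
(`inverse_sub_entry_nonneg`), and the set of such `t` is closed, so continuous induction
runs from `t = max c (‖N‖ + 1)`, where the Neumann series applies, down to `c`. -/
theorem inverse_algebraMap_sub_entry_nonneg {N : Matrix ι ι ℝ} (hN : ∀ i j, 0 ≤ N i j) {c : ℝ}
    (hc : ∀ t, c ≤ t → t ∉ spectrum ℝ N) (i j : ι) :
    0 ≤ (algebraMap ℝ (Matrix ι ι ℝ) c - N)⁻¹ʳ i j := by
  set R : ℝ → Matrix ι ι ℝ := fun t => (algebraMap ℝ (Matrix ι ι ℝ) t - N)⁻¹ʳ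
  set S : Set ℝ := R ⁻¹' {M | ∀ i j, 0 ≤ M i j}
  suffices c ∈ S from this i j
  have hunit : ∀ t, c ≤ t → IsUnit (algebraMap ℝ (Matrix ι ι ℝ) t - N) :=
    fun t ht => spectrum.notMem_iff.1 (hc t ht)
  set b := max c (‖N‖ + 1)
  have hNb : ‖N‖ < b := (lt_add_one _).trans_le (le_max_right _ _)
  have hb : b ∈ S := by
    have hb0 : 0 < b := (norm_nonneg N).trans_lt hNb
    refine inverse_sub_entry_nonneg
      ((isUnit_iff_ne_zero.2 hb0.ne').map (algebraMap ℝ (Matrix ι ι ℝ))) ?_ hN ?_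
    · rw [inverse_algebraMap hb0.ne']
      exact algebraMap_entry_nonneg (inv_nonneg.2 hb0.le)
    · rwa [inverse_algebraMap hb0.ne', ← Algebra.smul_def, norm_smul,
        Real.norm_of_nonneg (inv_nonneg.2 hb0.le), inv_mul_lt_one₀ hb0]
  have hclosed : IsClosed (S ∩ Set.Icc c b) := by
    have hcont : ContinuousOn R (Set.Icc c b) := fun t ht =>
      ContinuousAt.continuousWithinAt <| ContinuousAt.comp (g := Ring.inverse)
        ((hunit t ht.1).unit_spec ▸ NormedRing.inverse_continuousAt _)
        ((continuous_algebraMap ℝ _).sub continuous_const).continuousAt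
    rw [Set.inter_comm]
    exact hcont.preimage_isClosed_of_isClosed isClosed_Icc isClosed_setOf_entry_nonneg
  refine hclosed.mem_of_ge_of_forall_exists_lt hb (le_max_left _ _) fun t ⟨ht, htc, _⟩ => ?_
  set δ := min (t - c) (‖R t‖ + 1)⁻¹
  have hδ : 0 < δ := lt_min (sub_pos.2 htc) (by positivity)
  have hδR : δ * ‖R t‖ < 1 := calc
    δ * ‖R t‖ ≤ (‖R t‖ + 1)⁻¹ * ‖R t‖ := by gcongr; exact min_le_right _ _
    _ < 1 := by rw [inv_mul_lt_one₀ (by positivity)]; linarith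
  refine ⟨t - δ, ?_, by linarith [min_le_left (t - c) (‖R t‖ + 1)⁻¹], by linarith⟩
  have hshift : algebraMap ℝ (Matrix ι ι ℝ) (t - δ) - N
      = (algebraMap ℝ (Matrix ι ι ℝ) t - N) - algebraMap ℝ (Matrix ι ι ℝ) δ := by
    rw [map_sub]; abel
  show ∀ i j, 0 ≤ (algebraMap ℝ (Matrix ι ι ℝ) (t - δ) - N)⁻¹ʳ i j
  rw [hshift]
  refine inverse_sub_entry_nonneg (hunit t htc.le) ht (algebraMap_entry_nonneg hδ.le) ?_
  rwa [← Algebra.commutes, ← Algebra.smul_def, norm_smul, Real.norm_of_nonneg hδ.le]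

end Nonneg

/-- Row Gershgorin (`eigenvalue_mem_ball`) applied to `(diagonal w)⁻¹ * Mᵀ * diagonal w`. -/
theorem exists_norm_sub_diag_mul_le_of_mem_spectrum {𝕜 ι : Type*} [NormedField 𝕜] [Fintype ι]
    [DecidableEq ι] {M : Matrix ι ι 𝕜} {μ : 𝕜} (hμ : μ ∈ spectrum 𝕜 M) {w : ι → 𝕜}
    (hw : ∀ i, w i ≠ 0) :
    ∃ j, ‖μ - M j j‖ * ‖w j‖ ≤ ∑ i ∈ Finset.univ.erase j, ‖M i j‖ * ‖w i‖ := by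
  let u : (Matrix ι ι 𝕜)ˣ := ⟨diagonal w, diagonal w⁻¹, by simp [hw], by simp [hw]⟩
  set L := (↑u⁻¹ : Matrix ι ι 𝕜) * Mᵀ * (u : Matrix ι ι 𝕜)
  have hL : μ ∈ spectrum 𝕜 L := by
    rwa [spectrum.units_conjugate', mem_spectrum_iff_isRoot_charpoly, charpoly_transpose,
      ← mem_spectrum_iff_isRoot_charpoly]
  rw [← spectrum_toLin', ← Module.End.hasEigenvalue_iff_mem_spectrum] at hL
  obtain ⟨j, hj⟩ := eigenvalue_mem_ball hL
  have hentry : ∀ i, L j i = (w j)⁻¹ * M i j * w i := by simp [L, u, diagonal_mul, mul_diagonal]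
  rw [Metric.mem_closedBall, dist_eq_norm, hentry j, mul_comm, ← mul_assoc,
    mul_inv_cancel₀ (hw j), one_mul] at hj
  refine ⟨j, ?_⟩
  calc ‖μ - M j j‖ * ‖w j‖ ≤ (∑ i ∈ Finset.univ.erase j, ‖L j i‖) * ‖w j‖ := by gcongr
    _ = ∑ i ∈ Finset.univ.erase j, ‖M i j‖ * ‖w i‖ := by
      rw [Finset.sum_mul]
      refine Finset.sum_congr rfl fun i _ => ?_
      rw [hentry, norm_mul, norm_mul, norm_inv]
      field_simp [norm_ne_zero_iff.2 (hw j)]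

end Matrix

theorem exists_pos_mul_le_one {ι : Type*} [Fintype ι] (p : ι → ℝ) :
    ∃ ξ : ℝ, 0 < ξ ∧ ∀ j, ξ * p j ≤ 1 := by
  have hsum : ∀ j, p j < 1 + ∑ i, |p i| := fun j => by
    linarith [le_abs_self (p j), Finset.single_le_sum (fun i _ => abs_nonneg (p i))
      (Finset.mem_univ j)]
  have hpos : 0 < 1 + ∑ i, |p i| := by
    linarith [Finset.sum_nonneg (s := Finset.univ) fun i _ => abs_nonneg (p i)]
  exact ⟨(1 + ∑ i, |p i|)⁻¹, inv_pos.2 hpos, fun j => by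
    rw [inv_mul_le_one₀ hpos]; exact (hsum j).le⟩

section Metzler

variable {n : ℕ} {K : Matrix (Fin n) (Fin n) ℝ}

theorem IsHurwitz.notMem_spectrum (hK : IsHurwitz K) {t : ℝ} (ht : 0 ≤ t) :
    t ∉ spectrum ℝ K := by
  intro hmem
  rw [mem_spectrum_iff_isRoot_charpoly] at hmem
  have := hK t <| by
    rw [mem_spectrum_iff_isRoot_charpoly,
      show K.map (fun a => (a : ℂ)) = K.map Complex.ofRealHom from rfl, charpoly_map]
    exact hmem.map
  rw [Complex.ofReal_re] at this
  linarith

theorem IsMetzler.exists_algebraMap_add_entry_nonneg (hK : IsMetzler K) :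
    ∃ s : ℝ, ∀ i j, 0 ≤ (algebraMap ℝ _ s + K) i j := by
  refine ⟨∑ i, |K i i|, fun i j => ?_⟩
  rw [Matrix.add_apply, algebraMap_matrix_apply]
  split_ifs with hij
  · subst hij
    have := Finset.single_le_sum (f := fun i => |K i i|) (fun _ _ => abs_nonneg _)
      (Finset.mem_univ i)
    simp only [Algebra.algebraMap_self, RingHom.id_apply]
    linarith [neg_abs_le (K i i)]
  · simpa using hK i j hij

theorem IsMetzler.isHurwitz_of_vecMul_neg (hK : IsMetzler K) {p : Fin n → ℝ}
    (hp : ∀ i, 0 < p i) (h : ∀ j, vecMul p K j < 0) : IsHurwitz K := by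
  intro μ hμ
  obtain ⟨j, hj⟩ := exists_norm_sub_diag_mul_le_of_mem_spectrum hμ
    (w := fun i => (p i : ℂ)) fun i => Complex.ofReal_ne_zero.2 (hp i).ne'
  simp only [map_apply, Complex.norm_real, Real.norm_of_nonneg (hp j).le] at hj
  have hoff : ∑ i ∈ Finset.univ.erase j, ‖K i j‖ * ‖p i‖ = vecMul p K j - p j * K j j := by
    rw [Finset.sum_congr rfl fun i hi => by
      rw [Real.norm_of_nonneg (hK i j (Finset.ne_of_mem_erase hi)), Real.norm_of_nonneg (hp i).le,
        mul_comm], Finset.sum_erase_eq_sub (Finset.mem_univ j)]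
    rfl
  have hre : μ.re - K j j ≤ ‖μ - K j j‖ := by
    simpa using Complex.re_le_norm (μ - K j j)
  rw [hoff] at hj
  nlinarith [hp j, h j]

theorem IsMetzler.exists_pos_vecMul_eq_neg_one (hK : IsMetzler K) (hH : IsHurwitz K) :
    ∃ p : Fin n → ℝ, (∀ i, 0 < p i) ∧ vecMul p K = -1 := by
  obtain ⟨s, hN⟩ := hK.exists_algebraMap_add_entry_nonneg
  have hP := inverse_algebraMap_sub_entry_nonneg hN fun t ht hmem =>
    hH.notMem_spectrum (sub_nonneg.2 ht)
      (by rwa [← sub_add_cancel t s, spectrum.add_mem_add_iff] at hmem)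
  rw [sub_add_cancel_left] at hP
  have hunit : IsUnit (-K) := ((spectrum.zero_notMem_iff ℝ).1 (hH.notMem_spectrum le_rfl)).neg
  refine ⟨vecMul 1 (-K)⁻¹ʳ, vecMul_one_pos_of_entry_nonneg hP hunit.ringInverse, ?_⟩
  have hPK : (-K)⁻¹ʳ * K = -1 := by
    rw [← neg_eq_iff_eq_neg, ← mul_neg, Ring.inverse_mul_cancel _ hunit]
  rw [vecMul_vecMul, hPK, vecMul_neg, vecMul_one]

theorem IsMetzler.isHurwitz_iff (hK : IsMetzler K) :
    IsHurwitz K ↔ ∃ ξ : ℝ, 0 < ξ ∧ ∃ p : Fin n → ℝ, (∀ i, 0 < p i) ∧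
      ∀ j, vecMul p K j ≤ -(ξ * p j) := by
  refine ⟨fun hH => ?_, fun ⟨ξ, hξ, p, hp, h⟩ => hK.isHurwitz_of_vecMul_neg hp fun j =>
    (h j).trans_lt (neg_neg_of_pos (mul_pos hξ (hp j)))⟩
  obtain ⟨p, hp, hpK⟩ := hK.exists_pos_vecMul_eq_neg_one hH
  obtain ⟨ξ, hξ, hξp⟩ := exists_pos_mul_le_one p
  exact ⟨ξ, hξ, p, hp, fun j => by simpa [hpK] using hξp j⟩

end Metzler

/-- hypothesis (H1) is equivalent to `A + B₁ Σ C₁` being Hurwitz for every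
`0 ≤ Σ ≤ Δ`. -/
theorem stmt3 {n m₁ p₁ : ℕ}
    (A : Matrix (Fin n) (Fin n) ℝ) (B₁ : Matrix (Fin n) (Fin m₁) ℝ)
    (C₁ : Matrix (Fin p₁) (Fin n) ℝ)
    (hA : IsMetzler A) (hB₁ : ∀ i j, 0 ≤ B₁ i j) (hC₁ : ∀ i j, 0 ≤ C₁ i j)
    (Δ : Matrix (Fin m₁) (Fin p₁) ℝ) (hΔ : ∀ i j, 0 ≤ Δ i j) :
    (∃ ξ : ℝ, 0 < ξ ∧ ∃ p : Fin n → ℝ, (∀ i, 0 < p i) ∧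
        ∀ j, vecMul p (A + B₁ * Δ * C₁) j ≤ -(ξ * p j)) ↔
    (∀ Sig : Matrix (Fin m₁) (Fin p₁) ℝ,
        (∀ i j, 0 ≤ Sig i j ∧ Sig i j ≤ Δ i j) → IsHurwitz (A + B₁ * Sig * C₁)) := by
  have hMetzler : ∀ Sig : Matrix (Fin m₁) (Fin p₁) ℝ, (∀ i j, 0 ≤ Sig i j) →
      IsMetzler (A + B₁ * Sig * C₁) := fun Sig hSig i j hij =>
    add_nonneg (hA i j hij) (mul_entry_nonneg (mul_entry_nonneg hB₁ hSig) hC₁ i j)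
  refine ⟨fun ⟨ξ, hξ, p, hp, hpΔ⟩ Sig hSig => ?_, fun h =>
    (hMetzler Δ hΔ).isHurwitz_iff.1 (h Δ fun i j => ⟨hΔ i j, le_rfl⟩)⟩
  have hle : ∀ i j, (A + B₁ * Sig * C₁) i j ≤ (A + B₁ * Δ * C₁) i j := fun i j =>
    add_le_add le_rfl (mul_mul_entry_mono hB₁ hC₁ (fun k l => (hSig k l).2) i j)
  exact (hMetzler Sig fun i j => (hSig i j).1).isHurwitz_iff.2 ⟨ξ, hξ, p, hp, fun j =>
    (vecMul_le_vecMul_of_entry_le (fun i => (hp i).le) hle j).trans (hpΔ j)⟩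
end
end

section
/- Consider the forced Lur'e system ẋ(t) = Ax(t) + B₁f(C₁x(t)) + B₂w(t) under (A1) and (A2) with time-independent f, assume hypothesis (H1) holds, and suppose there exist a strictly positive vector v ∈ ℝ^{p₁} and ρ ∈ (0,1) such that v^⊤G₁₁(0)Δ ≤ ρv^⊤ componentwise, where G₁₁(0) := C₁(−A)^{-1}B₁. If, in addition, f maps the nonnegative orthant ℝ^{p₁}_+ into the nonnegative orthant ℝ^{m₁}_+ and w* ≥ 0, then the unique x* ∈ ℝ^n satisfying 0 = Ax* + B₁f(C₁x*) + B₂w* is entrywise nonnegative. -/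
open Matrix

noncomputable section

/-- if `f` maps the nonnegative orthant into the nonnegative orthant and
`w* ≥ 0`, then the unique equilibrium `x*` is entrywise nonnegative. -/
theorem stmt10 {n m₁ m₂ p₁ : ℕ}
    (A : Matrix (Fin n) (Fin n) ℝ) (B₁ : Matrix (Fin n) (Fin m₁) ℝ)
    (B₂ : Matrix (Fin n) (Fin m₂) ℝ) (C₁ : Matrix (Fin p₁) (Fin n) ℝ)
    -- (A1)
    (hA : IsMetzler A) (hB₁ : ∀ i j, 0 ≤ B₁ i j) (hB₂ : ∀ i j, 0 ≤ B₂ i j)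
    (hC₁ : ∀ i j, 0 ≤ C₁ i j)
    -- (A2), time-independent
    (f : (Fin p₁ → ℝ) → Fin m₁ → ℝ) (Δ : Matrix (Fin m₁) (Fin p₁) ℝ)
    (hΔ : ∀ i j, 0 ≤ Δ i j)
    (hf_inc : ∀ ζ₁ ζ₂ : Fin p₁ → ℝ,
        ∀ i, |f ζ₁ i - f ζ₂ i| ≤ Δ.mulVec (fun j => |ζ₁ j - ζ₂ j|) i)
    -- (H1)
    (ξ : ℝ) (hξ : 0 < ξ) (p : Fin n → ℝ) (hp : ∀ i, 0 < p i)
    (hH1 : ∀ j, vecMul p (A + B₁ * Δ * C₁) j ≤ -(ξ * p j))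
    -- weighted small-gain condition v⊤ G₁₁(0) Δ ≤ ρ v⊤ with G₁₁(0) = C₁(−A)⁻¹B₁
    (v : Fin p₁ → ℝ) (hv : ∀ i, 0 < v i) (ρ : ℝ) (hρ0 : 0 < ρ) (hρ1 : ρ < 1)
    (hsg : ∀ j, vecMul v ((C₁ * (-A)⁻¹ * B₁) * Δ) j ≤ ρ * v j)
    -- positivity of f and of w*
    (hfpos : ∀ ζ : Fin p₁ → ℝ, (∀ j, 0 ≤ ζ j) → ∀ i, 0 ≤ f ζ i)
    (wstar : Fin m₂ → ℝ) (hwstar : ∀ i, 0 ≤ wstar i) :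
    ∀ xstar : Fin n → ℝ,
      (0 : Fin n → ℝ) =
          A.mulVec xstar + B₁.mulVec (f (C₁.mulVec xstar)) + B₂.mulVec wstar →
      ∀ i, 0 ≤ xstar i := by
  intro xstar heq
  set ζ := C₁.mulVec xstar with hζ
  set m : Fin n → ℝ := fun i => max (-(xstar i)) 0 with hm
  set xp : Fin n → ℝ := fun i => max (xstar i) 0 with hxp
  have hm0 : ∀ i, 0 ≤ m i := fun i => le_max_right _ _
  have hxp0 : ∀ i, 0 ≤ xp i := fun i => le_max_right _ _
  have hdiff : ∀ i, xstar i - xp i = -(m i) := by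
    intro i
    rcases le_total (xstar i) 0 with h | h
    · simp [hm, hxp, max_eq_right h, max_eq_left (neg_nonneg.mpr h)]
    · simp [hm, hxp, max_eq_left h, max_eq_right (neg_nonpos.mpr h)]
  have feq : ∀ i, A.mulVec xstar i + B₁.mulVec (f ζ) i + B₂.mulVec wstar i = 0 := by
    intro i
    have := congrFun heq i
    simpa [Pi.add_apply] using this.symm
  -- |C₁ xstar - C₁ xp| = C₁ m componentwise
  have hcx : ∀ j, |ζ j - C₁.mulVec xp j| = C₁.mulVec m j := by
    intro j
    have h1 : ζ j - C₁.mulVec xp j = -(C₁.mulVec m j) := by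
      simp only [hζ, Matrix.mulVec, dotProduct]
      rw [← Finset.sum_sub_distrib, ← Finset.sum_neg_distrib]
      refine Finset.sum_congr rfl fun l _ => ?_
      rw [← mul_sub, hdiff l, mul_neg]
    rw [h1, abs_neg, abs_of_nonneg]
    show (0:ℝ) ≤ ∑ l, C₁ j l * m l
    exact Finset.sum_nonneg fun l _ => mul_nonneg (hC₁ j l) (hm0 l)
  -- lower bound on f ζ
  have hfb : ∀ k, -(Δ.mulVec (C₁.mulVec m)) k ≤ f ζ k := by
    intro k
    have h1 := hf_inc ζ (C₁.mulVec xp) k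
    have h2 : (Δ.mulVec (fun j => |ζ j - C₁.mulVec xp j|)) k
        = Δ.mulVec (C₁.mulVec m) k := by
      have hg : (fun j => |ζ j - C₁.mulVec xp j|) = C₁.mulVec m := funext hcx
      rw [hg]
    have h3 : 0 ≤ f (C₁.mulVec xp) k := by
      refine hfpos (C₁.mulVec xp) (fun j => ?_) k
      show (0:ℝ) ≤ ∑ l, C₁ j l * xp l
      exact Finset.sum_nonneg fun l _ => mul_nonneg (hC₁ j l) (hxp0 l)
    have h4 : f (C₁.mulVec xp) k - f ζ k ≤ Δ.mulVec (C₁.mulVec m) k := by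
      have := abs_le.mp (h1.trans_eq h2)
      linarith [this.1]
    linarith
  have hBDC : ∀ i j, 0 ≤ (B₁ * Δ * C₁) i j := by
    intro i j
    simp only [Matrix.mul_apply]
    refine Finset.sum_nonneg fun k _ => mul_nonneg ?_ (hC₁ k j)
    exact Finset.sum_nonneg fun l _ => mul_nonneg (hB₁ i l) (hΔ l k)
  -- key: (A + B₁ΔC₁) m ≥ 0 componentwise
  have hrow : ∀ i, 0 ≤ (A + B₁ * Δ * C₁).mulVec m i := by
    intro i
    rcases le_or_gt 0 (xstar i) with hxi | hxi
    · have hmi : m i = 0 := by simp [hm, max_eq_right (neg_nonpos.mpr hxi)]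
      simp only [Matrix.mulVec, dotProduct, Matrix.add_apply]
      refine Finset.sum_nonneg fun j _ => ?_
      rcases eq_or_ne j i with rfl | hji
      · simp [hmi]
      · exact mul_nonneg (add_nonneg (hA i j (Ne.symm hji)) (hBDC i j)) (hm0 j)
    · -- xstar i < 0
      have hxpi : xp i = 0 := by simp [hxp, max_eq_right hxi.le]
      have hAxp : 0 ≤ A.mulVec xp i := by
        simp only [Matrix.mulVec, dotProduct]
        refine Finset.sum_nonneg fun j _ => ?_
        rcases eq_or_ne j i with rfl | hji
        · simp [hxpi]
        · exact mul_nonneg (hA i j (Ne.symm hji)) (hxp0 j)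
      have hAx : A.mulVec xstar i = A.mulVec xp i - A.mulVec m i := by
        simp only [Matrix.mulVec, dotProduct]
        rw [← Finset.sum_sub_distrib]
        refine Finset.sum_congr rfl fun l _ => ?_
        rw [← mul_sub]
        have : xstar l = xp l - m l := by linarith [hdiff l]
        rw [this, mul_sub]
      have hB2 : 0 ≤ B₂.mulVec wstar i := by
        show (0:ℝ) ≤ ∑ k, B₂ i k * wstar k
        exact Finset.sum_nonneg fun k _ => mul_nonneg (hB₂ i k) (hwstar k)
      have hB1f : -(B₁.mulVec (Δ.mulVec (C₁.mulVec m))) i ≤ B₁.mulVec (f ζ) i := by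
        simp only [Matrix.mulVec, dotProduct, ← Finset.sum_neg_distrib]
        refine Finset.sum_le_sum fun k _ => ?_
        rw [← mul_neg]
        exact mul_le_mul_of_nonneg_left (hfb k) (hB₁ i k)
      have hmm : (B₁ * Δ * C₁).mulVec m = B₁.mulVec (Δ.mulVec (C₁.mulVec m)) := by
        rw [Matrix.mulVec_mulVec, Matrix.mulVec_mulVec]
      have hAm : -(B₁ * Δ * C₁).mulVec m i ≤ A.mulVec m i := by
        have h5 := feq i
        rw [hAx] at h5
        have : A.mulVec m i = A.mulVec xp i + B₁.mulVec (f ζ) i + B₂.mulVec wstar i := by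
          linarith
        rw [this]
        have : -(B₁ * Δ * C₁).mulVec m i = -(B₁.mulVec (Δ.mulVec (C₁.mulVec m))) i := by
          rw [hmm]
        rw [this]
        linarith [hB1f]
      have : (A + B₁ * Δ * C₁).mulVec m i
          = A.mulVec m i + (B₁ * Δ * C₁).mulVec m i := by
        rw [Matrix.add_mulVec]; rfl
      rw [this]
      linarith
  -- sum against p
  have hdp : (0:ℝ) ≤ p ⬝ᵥ ((A + B₁ * Δ * C₁).mulVec m) :=
    Finset.sum_nonneg fun i _ => mul_nonneg (hp i).le (hrow i)
  rw [Matrix.dotProduct_mulVec] at hdp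
  have hub : vecMul p (A + B₁ * Δ * C₁) ⬝ᵥ m ≤ -ξ * (∑ j, p j * m j) := by
    simp only [dotProduct, Finset.mul_sum]
    refine Finset.sum_le_sum fun j _ => ?_
    have := mul_le_mul_of_nonneg_right (hH1 j) (hm0 j)
    calc vecMul p (A + B₁ * Δ * C₁) j * m j ≤ -(ξ * p j) * m j := this
      _ = -ξ * (p j * m j) := by ring
  have hS0 : ∀ j, 0 ≤ p j * m j := fun j => mul_nonneg (hp j).le (hm0 j)
  have hSnn : 0 ≤ ∑ j, p j * m j := Finset.sum_nonneg fun j _ => hS0 j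
  have hSle : ∑ j, p j * m j ≤ 0 := by nlinarith [hdp.trans hub]
  have hSzero : ∑ j, p j * m j = 0 := le_antisymm hSle hSnn
  intro i
  have hmi : p i * m i = 0 := by
    have := (Finset.sum_eq_zero_iff_of_nonneg (fun j _ => hS0 j)).mp hSzero i (Finset.mem_univ i)
    exact this
  have hmz : m i = 0 := by
    rcases mul_eq_zero.mp hmi with h | h
    · exact absurd h (ne_of_gt (hp i))
    · exact h
  have h : -xstar i ≤ m i := le_max_left _ _
  linarith
end
end

section
/- Consider the forced Lur'e system ẋ(t) = Ax(t) + B₁f(C₁x(t)) + B₂w(t) under (A1) and (A2) with time-independent f, and assume hypothesis (H1) holds. Let 1 ≤ s < ∞. If (w_a, x_a) and (w_b, x_b) are trajectories of the system such that t ↦ e^{γt}(w_a − w_b)(t) belongs to L^s(ℝ₊, ℝ^{m₂}) for some γ > 0, then x_a(t) − x_b(t) → 0 exponentially as t → ∞, i.e. there exist constants M ≥ 0 and β > 0 such that ‖x_a(t) − x_b(t)‖ ≤ M e^{−βt} for all t ≥ 0. -/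
/-!
Put `z = x_a - x_b` and `V = pᵀ|z|`. Over a short interval `[a, u]`, freeze the signs `σ` of
`z u`: then `V u - V a ≤ pᵀ σ (z u - z a) = ∫ pᵀ σ ż`, and since `A` is Metzler and `B₁`, `Δ`,
`C₁`, `B₂` are nonnegative, `σ ż ≤ (A + B₁ΔC₁)|z| + B₂|w_a - w_b|` up to an error that vanishes as
`u → a`. With (H1) this bounds the lower right Dini derivative of `V - ∫ (-ξ V + c ‖w_a - w_b‖)`
by `0`, whence `V t₂ ≤ V t₁ + ∫_{t₁}^{t₂} (-ξ V + c ‖w_a - w_b‖)`. On unit intervals this gives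
`V (k + 1) ≤ (1 + ξ)⁻¹ V k + O(e^{-γ k})`, the forcing being controlled through `q ≤ 1 + q ^ s`
by the weighted `L^s` bound, and a discrete Gronwall argument yields exponential decay of `V`,
hence of `‖x_a - x_b‖`.
-/

open Matrix MeasureTheory Filter Topology

noncomputable section

/-- A pair `(w, x)` is a trajectory of the forced Lur'e system
`ẋ = Ax + B₁ f(C₁ x) + B₂ w` (time-independent nonlinearity) on `ℝ₊`. -/
def IsTrajectory {n m₁ m₂ p₁ : ℕ}
    (A : Matrix (Fin n) (Fin n) ℝ) (B₁ : Matrix (Fin n) (Fin m₁) ℝ)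
    (B₂ : Matrix (Fin n) (Fin m₂) ℝ) (C₁ : Matrix (Fin p₁) (Fin n) ℝ)
    (f : (Fin p₁ → ℝ) → Fin m₁ → ℝ)
    (w : ℝ → Fin m₂ → ℝ) (x : ℝ → Fin n → ℝ) : Prop :=
  ContinuousOn x (Set.Ici 0) ∧
  ∀ t : ℝ, 0 ≤ t →
    x t = x 0 + ∫ s in (0:ℝ)..t,
      (A.mulVec (x s) + B₁.mulVec (f (C₁.mulVec (x s))) + B₂.mulVec (w s))

open Set

section NonnegMatrix

variable {ι κ : Type*} [Fintype κ] {M : Matrix ι κ ℝ}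

theorem mulVec_le_mulVec_of_nonneg (hM : ∀ i j, 0 ≤ M i j) {u v : κ → ℝ} (huv : u ≤ v) :
    M *ᵥ u ≤ M *ᵥ v :=
  fun i => dotProduct_le_dotProduct_of_nonneg_left huv (hM i)

theorem abs_mulVec_le_mulVec_abs (hM : ∀ i j, 0 ≤ M i j) (v : κ → ℝ) : |M *ᵥ v| ≤ M *ᵥ |v| :=
  fun i => by
    simpa [mulVec, dotProduct, abs_mul, abs_of_nonneg (hM i _)] using
      Finset.abs_sum_le_sum_abs (fun j => M i j * v j) Finset.univ

end NonnegMatrix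

theorem mul_le_abs_of_abs_le_one {s : ℝ} (hs : |s| ≤ 1) (x : ℝ) : s * x ≤ |x| :=
  (le_abs_self _).trans (by rw [abs_mul]; exact mul_le_of_le_one_left (abs_nonneg x) hs)

theorem abs_sub_mul_le_two_mul_abs_sub {s x y : ℝ} (hs : |s| ≤ 1) (hy : s * y = |y|) :
    |x| - s * x ≤ 2 * |x - y| := by
  have h₁ := abs_sub_abs_le_abs_sub x y
  have h₂ := mul_le_abs_of_abs_le_one hs (y - x)
  rw [abs_sub_comm] at h₂
  linarith [mul_sub s y x]

theorem IsMetzler.mul_mulVec_le {n : ℕ} {A : Matrix (Fin n) (Fin n) ℝ} (hA : IsMetzler A)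
    {σ : Fin n → ℝ} (hσ : ∀ i, |σ i| ≤ 1) (v : Fin n → ℝ) (i : Fin n) :
    σ i * (A *ᵥ v) i ≤ (A *ᵥ |v|) i + |A i i| * (|v i| - σ i * v i) := by
  have hterm : ∀ j, σ i * (A i j * v j) ≤
      A i j * |v j| + if j = i then |A i i| * (|v i| - σ i * v i) else 0 := by
    intro j
    split_ifs with hji
    · subst hji
      have := mul_le_abs_of_abs_le_one (hσ j) (v j)
      nlinarith [neg_abs_le (A j j), abs_nonneg (A j j)]
    · have := mul_le_mul_of_nonneg_left (mul_le_abs_of_abs_le_one (hσ i) (v j))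
        (hA i j (Ne.symm hji))
      linarith
  calc σ i * (A *ᵥ v) i = ∑ j, σ i * (A i j * v j) := by simp [mulVec, dotProduct, Finset.mul_sum]
    _ ≤ ∑ j, (A i j * |v j| + if j = i then |A i i| * (|v i| - σ i * v i) else 0) :=
      Finset.sum_le_sum fun j _ => hterm j
    _ = _ := by simp [Finset.sum_add_distrib, mulVec, dotProduct]

section DotProduct

variable {ι κ : Type*} [Fintype ι] [Fintype κ] {p : ι → ℝ}

theorem dotProduct_mulVec_le_of_vecMul_le {M : Matrix ι ι ℝ} {ξ : ℝ}
    (hM : ∀ j, vecMul p M j ≤ -(ξ * p j)) {v : ι → ℝ} (hv : 0 ≤ v) :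
    p ⬝ᵥ (M *ᵥ v) ≤ -ξ * (p ⬝ᵥ v) := by
  rw [dotProduct_mulVec]
  calc p ᵥ* M ⬝ᵥ v ≤ (-ξ • p) ⬝ᵥ v :=
        dotProduct_le_dotProduct_of_nonneg_right (fun j => by simpa using hM j) hv
    _ = -ξ * (p ⬝ᵥ v) := by rw [smul_dotProduct, smul_eq_mul]

theorem dotProduct_mulVec_abs_le_mul_norm (hp : 0 ≤ p) {B : Matrix ι κ ℝ}
    (hB : ∀ i j, 0 ≤ B i j) (d : κ → ℝ) : p ⬝ᵥ (B *ᵥ |d|) ≤ p ⬝ᵥ (B *ᵥ 1) * ‖d‖ := by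
  have hd : |d| ≤ ‖d‖ • 1 := fun j => by simpa using norm_le_pi_norm d j
  calc p ⬝ᵥ (B *ᵥ |d|) ≤ p ⬝ᵥ (B *ᵥ (‖d‖ • 1)) :=
        dotProduct_le_dotProduct_of_nonneg_left (mulVec_le_mulVec_of_nonneg hB hd) hp
    _ = p ⬝ᵥ (B *ᵥ 1) * ‖d‖ := by rw [mulVec_smul, dotProduct_smul, smul_eq_mul, mul_comm]

end DotProduct

section LureBound

variable {n m₁ m₂ p₁ : ℕ} {A : Matrix (Fin n) (Fin n) ℝ} {B₁ : Matrix (Fin n) (Fin m₁) ℝ}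
  {B₂ : Matrix (Fin n) (Fin m₂) ℝ} {C₁ : Matrix (Fin p₁) (Fin n) ℝ}
  {Δ : Matrix (Fin m₁) (Fin p₁) ℝ}

theorem mulVec_abs_le_of_abs_le_mulVec_abs (hB₁ : ∀ i j, 0 ≤ B₁ i j) (hC₁ : ∀ i j, 0 ≤ C₁ i j)
    (hΔ : ∀ i j, 0 ≤ Δ i j) {z : Fin n → ℝ} {e : Fin m₁ → ℝ} (he : |e| ≤ Δ *ᵥ |C₁ *ᵥ z|) :
    B₁ *ᵥ |e| ≤ (B₁ * Δ * C₁) *ᵥ |z| := by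
  rw [← mulVec_mulVec, ← mulVec_mulVec]
  exact mulVec_le_mulVec_of_nonneg hB₁
    (he.trans (mulVec_le_mulVec_of_nonneg hΔ (abs_mulVec_le_mulVec_abs hC₁ z)))

theorem dotProduct_mul_lure_le (hA : IsMetzler A) (hB₁ : ∀ i j, 0 ≤ B₁ i j)
    (hB₂ : ∀ i j, 0 ≤ B₂ i j) (hC₁ : ∀ i j, 0 ≤ C₁ i j) (hΔ : ∀ i j, 0 ≤ Δ i j)
    {ξ : ℝ} {p : Fin n → ℝ} (hp : 0 ≤ p) (hH1 : ∀ j, vecMul p (A + B₁ * Δ * C₁) j ≤ -(ξ * p j))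
    {z w : Fin n → ℝ} {e : Fin m₁ → ℝ} (he : |e| ≤ Δ *ᵥ |C₁ *ᵥ z|) (d : Fin m₂ → ℝ)
    {σ : Fin n → ℝ} (hσ : ∀ i, |σ i| ≤ 1) (hσw : σ * w = |w|) :
    p ⬝ᵥ (σ * (A *ᵥ z + B₁ *ᵥ e + B₂ *ᵥ d)) ≤
      -ξ * (p ⬝ᵥ |z|) + p ⬝ᵥ (B₂ *ᵥ 1) * ‖d‖ + 2 * (∑ i, p i * |A i i|) * ‖z - w‖ := by
  have hcomp : σ * (A *ᵥ z + B₁ *ᵥ e + B₂ *ᵥ d) ≤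
      (A + B₁ * Δ * C₁) *ᵥ |z| + B₂ *ᵥ |d| + fun i => 2 * |A i i| * ‖z - w‖ := by
    intro i
    have hA' := hA.mul_mulVec_le hσ z i
    have hpen := mul_le_mul_of_nonneg_left ((abs_sub_mul_le_two_mul_abs_sub (hσ i)
      (congrFun hσw i)).trans (mul_le_mul_of_nonneg_left (norm_le_pi_norm (z - w) i) two_pos.le))
      (abs_nonneg (A i i))
    have hB₁' := (mul_le_abs_of_abs_le_one (hσ i) _).trans ((abs_mulVec_le_mulVec_abs hB₁ e i).trans
      (mulVec_abs_le_of_abs_le_mulVec_abs hB₁ hC₁ hΔ he i))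
    have hB₂' := (mul_le_abs_of_abs_le_one (hσ i) _).trans (abs_mulVec_le_mulVec_abs hB₂ d i)
    simp only [Pi.mul_apply, Pi.add_apply, add_mulVec] at hB₁' hB₂' ⊢
    linarith
  calc p ⬝ᵥ (σ * (A *ᵥ z + B₁ *ᵥ e + B₂ *ᵥ d))
      ≤ p ⬝ᵥ ((A + B₁ * Δ * C₁) *ᵥ |z| + B₂ *ᵥ |d| + fun i => 2 * |A i i| * ‖z - w‖) :=
        dotProduct_le_dotProduct_of_nonneg_left hcomp hp
    _ = p ⬝ᵥ ((A + B₁ * Δ * C₁) *ᵥ |z|) + p ⬝ᵥ (B₂ *ᵥ |d|)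
          + 2 * (∑ i, p i * |A i i|) * ‖z - w‖ := by
        rw [dotProduct_add, dotProduct_add]
        congr 1
        simp only [dotProduct, Finset.mul_sum, Finset.sum_mul]
        exact Finset.sum_congr rfl fun i _ => by ring
    _ ≤ _ := by
        gcongr
        · exact dotProduct_mulVec_le_of_vecMul_le hH1 (fun i => abs_nonneg (z i))
        · exact dotProduct_mulVec_abs_le_mul_norm hp hB₂ d

end LureBound

theorem continuous_of_abs_sub_le_mulVec {ι κ : Type*} [Fintype κ] {Δ : Matrix ι κ ℝ}
    (hΔ : ∀ i j, 0 ≤ Δ i j) {f : (κ → ℝ) → ι → ℝ}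
    (hf : ∀ ζ₁ ζ₂, |f ζ₁ - f ζ₂| ≤ Δ *ᵥ |ζ₁ - ζ₂|) : Continuous f := by
  refine continuous_pi fun i => (LipschitzWith.of_dist_le_mul (K := ⟨∑ j, Δ i j,
    Finset.sum_nonneg fun j _ => hΔ i j⟩) fun ζ₁ ζ₂ => ?_).continuous
  have hζ : |ζ₁ - ζ₂| ≤ dist ζ₁ ζ₂ • 1 := fun j => by
    simpa [dist_eq_norm] using norm_le_pi_norm (ζ₁ - ζ₂) j
  calc dist (f ζ₁ i) (f ζ₂ i) = |f ζ₁ - f ζ₂| i := Real.dist_eq _ _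
    _ ≤ (Δ *ᵥ (dist ζ₁ ζ₂ • 1)) i := (hf ζ₁ ζ₂).trans (mulVec_le_mulVec_of_nonneg hΔ hζ) i
    _ = (∑ j, Δ i j) * dist ζ₁ ζ₂ := by simp [mulVec, dotProduct, Finset.sum_mul, mul_comm]

theorem MeasureTheory.LocallyIntegrableOn.intervalIntegrable_of_nonneg {E : Type*}
    [NormedAddCommGroup E] {g : ℝ → E} (hg : LocallyIntegrableOn g (Ici 0)) {u v : ℝ}
    (hu : 0 ≤ u) (hv : 0 ≤ v) :
    IntervalIntegrable g volume u v :=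
  (hg.integrableOn_compact_subset (fun _ hx => (le_min hu hv).trans hx.1)
    isCompact_uIcc).intervalIntegrable

theorem ContinuousOn.dotProduct_abs_sub {ι : Type*} [Fintype ι] {x y : ℝ → ι → ℝ} {s : Set ℝ}
    (p : ι → ℝ) (hx : ContinuousOn x s) (hy : ContinuousOn y s) :
    ContinuousOn (fun τ => p ⬝ᵥ |x τ - y τ|) s := by
  simp only [dotProduct, Pi.abs_apply, Pi.sub_apply]
  fun_prop

section DotProductIntegral

variable {ι : Type*} [Fintype ι] {h : ℝ → ι → ℝ} {a b : ℝ}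

theorem IntervalIntegrable.dotProduct (q : ι → ℝ) (hh : IntervalIntegrable h volume a b) :
    IntervalIntegrable (fun τ => q ⬝ᵥ h τ) volume a b :=
  let L := LinearMap.toContinuousLinearMap (dotProductBilin ℝ ℝ q)
  ⟨L.integrable_comp hh.1, L.integrable_comp hh.2⟩

theorem intervalIntegral_dotProduct (q : ι → ℝ) (hh : IntervalIntegrable h volume a b) :
    ∫ τ in a..b, q ⬝ᵥ h τ = q ⬝ᵥ ∫ τ in a..b, h τ :=
  (LinearMap.toContinuousLinearMap (dotProductBilin ℝ ℝ q)).intervalIntegral_comp_comm hh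

theorem IntervalIntegrable.mulVec {κ : Type*} [Fintype κ] (M : Matrix ι κ ℝ) {g : ℝ → κ → ℝ}
    (hg : IntervalIntegrable g volume a b) :
    IntervalIntegrable (fun τ => M *ᵥ g τ) volume a b :=
  let L := LinearMap.toContinuousLinearMap M.mulVecLin
  ⟨L.integrable_comp hg.1, L.integrable_comp hg.2⟩

end DotProductIntegral

theorem le_add_intervalIntegral_of_eventually_le {V ψ : ℝ → ℝ} {a b : ℝ} (hab : a ≤ b)
    (hV : ContinuousOn V (Icc a b)) (hψ : IntervalIntegrable ψ volume a b)
    (hloc : ∀ x ∈ Ico a b, ∀ ε > 0,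
      ∀ᶠ u in 𝓝[>] x, V u - V x ≤ (∫ τ in x..u, ψ τ) + ε * (u - x)) :
    V b ≤ V a + ∫ τ in a..b, ψ τ := by
  have hprim := intervalIntegral.continuousOn_primitive_interval' hψ left_mem_uIcc
  rw [uIcc_of_le hab] at hprim
  have hF : ContinuousOn (fun y => V y - ∫ τ in a..y, ψ τ) (Icc a b) := hV.sub hprim
  -- `hloc` says that `V - ∫ ψ` has nonpositive lower right Dini derivative, so it is fenced
  -- below the constant `V a`.
  have key := image_le_of_liminf_slope_right_le_deriv_boundary hF
    (B := fun _ => V a) (B' := fun _ => 0) (by simp) continuousOn_const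
    (fun x _ => hasDerivWithinAt_const x _ _) ?_ ⟨hab, le_rfl⟩
  · linarith
  intro x hx r hr
  have hr2 : (0 : ℝ) < r / 2 := half_pos hr
  refine ((hloc x hx (r / 2) hr2).and (Ioo_mem_nhdsGT hx.2)).frequently.mono ?_
  rintro u ⟨hu, hxu, hub⟩
  have hsub : ∀ y ∈ Icc a b, IntervalIntegrable ψ volume a y := fun y hy =>
    hψ.mono_set (uIcc_subset_uIcc left_mem_uIcc (by rwa [uIcc_of_le hab]))
  have hsplit : (∫ τ in a..u, ψ τ) - ∫ τ in a..x, ψ τ = ∫ τ in x..u, ψ τ :=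
    intervalIntegral.integral_interval_sub_left (hsub u ⟨hx.1.trans hxu.le, hub.le⟩)
      (hsub x (Ico_subset_Icc_self hx))
  rw [slope_def_field, div_lt_iff₀ (sub_pos.2 hxu)]
  nlinarith

theorem eventually_dotProduct_abs_sub_le {ι : Type*} [Fintype ι] {z h : ℝ → ι → ℝ} {ψ : ℝ → ℝ}
    {p : ι → ℝ} {K a ε : ℝ} (hp : 0 ≤ p) (hK : 0 ≤ K) (hε : 0 < ε)
    (hz : ContinuousWithinAt z (Ici a) a) (hzh : ∀ u ≥ a, z u - z a = ∫ τ in a..u, h τ)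
    (hh : ∀ u ≥ a, IntervalIntegrable h volume a u)
    (hψ : ∀ u ≥ a, IntervalIntegrable ψ volume a u)
    (hbound : ∀ τ ≥ a, ∀ σ w : ι → ℝ, (∀ i, |σ i| ≤ 1) → σ * w = |w| →
      p ⬝ᵥ (σ * h τ) ≤ ψ τ + K * ‖z τ - w‖) :
    ∀ᶠ u in 𝓝[>] a, p ⬝ᵥ |z u| - p ⬝ᵥ |z a| ≤ (∫ τ in a..u, ψ τ) + ε * (u - a) := by
  set η := ε / (2 * (K + 1))
  obtain ⟨δ, hδ, hδz⟩ := Metric.continuousWithinAt_iff.1 hz η (by positivity)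
  filter_upwards [Ioo_mem_nhdsGT (lt_add_of_pos_right a hδ)] with u ⟨hau, huδ⟩
  have hclose : ∀ τ ∈ Icc a u, dist (z τ) (z a) < η := fun τ hτ =>
    hδz hτ.1 (by rw [Real.dist_eq, abs_of_nonneg (sub_nonneg.2 hτ.1)]; linarith [hτ.2])
  have hsmall : ∀ τ ∈ Icc a u, K * ‖z τ - z u‖ ≤ ε := fun τ hτ => by
    have hτu : ‖z τ - z u‖ ≤ 2 * η := by
      rw [← dist_eq_norm]
      linarith [dist_triangle_right (z τ) (z u) (z a), hclose τ hτ, hclose u ⟨hau.le, le_rfl⟩]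
    calc K * ‖z τ - z u‖ ≤ K * (2 * η) := by gcongr
      _ = ε * (K / (K + 1)) := by simp only [η]; field_simp
      _ ≤ ε := mul_le_of_le_one_right hε.le ((div_le_one (by linarith)).2 (by linarith))
  set σ : ι → ℝ := fun i => SignType.sign (z u i)
  have hσ : ∀ i, |σ i| ≤ 1 := fun i => by
    rcases lt_trichotomy (z u i) 0 with hi | hi | hi <;> simp [σ, hi]
  have hσz : σ * z u = |z u| := funext fun i => sign_mul_self (z u i)
  have hσh : IntervalIntegrable (fun τ => p ⬝ᵥ (σ * h τ)) volume a u := by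
    simpa only [dotProduct, Pi.mul_apply, mul_assoc] using (hh u hau.le).dotProduct (p * σ)
  calc p ⬝ᵥ |z u| - p ⬝ᵥ |z a| ≤ p ⬝ᵥ (σ * (z u - z a)) := by
        rw [← dotProduct_sub]
        refine dotProduct_le_dotProduct_of_nonneg_left (fun i => ?_) hp
        have := mul_le_abs_of_abs_le_one (hσ i) (z a i)
        have hu := congrFun hσz i
        simp only [Pi.sub_apply, Pi.mul_apply, Pi.abs_apply] at hu ⊢
        linarith [mul_sub (σ i) (z u i) (z a i)]
    _ = ∫ τ in a..u, p ⬝ᵥ (σ * h τ) := by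
        rw [hzh u hau.le]
        simpa only [dotProduct, Pi.mul_apply, mul_assoc] using
          (intervalIntegral_dotProduct (p * σ) (hh u hau.le)).symm
    _ ≤ ∫ τ in a..u, (ψ τ + ε) :=
        intervalIntegral.integral_mono_on hau.le hσh ((hψ u hau.le).add intervalIntegrable_const)
          fun τ hτ => (hbound τ hτ.1 σ (z u) hσ hσz).trans (by linarith [hsmall τ hτ])
    _ = (∫ τ in a..u, ψ τ) + ε * (u - a) := by
        rw [intervalIntegral.integral_add (hψ u hau.le) intervalIntegrable_const,
          intervalIntegral.integral_const, smul_eq_mul, mul_comm]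

section Trajectory

variable {n m₁ m₂ p₁ : ℕ} {A : Matrix (Fin n) (Fin n) ℝ} {B₁ : Matrix (Fin n) (Fin m₁) ℝ}
  {B₂ : Matrix (Fin n) (Fin m₂) ℝ} {C₁ : Matrix (Fin p₁) (Fin n) ℝ}
  {f : (Fin p₁ → ℝ) → Fin m₁ → ℝ} {w : ℝ → Fin m₂ → ℝ} {x : ℝ → Fin n → ℝ}

theorem IsTrajectory.intervalIntegrable (hf : Continuous f) (hw : LocallyIntegrableOn w (Ici 0))
    (hx : IsTrajectory A B₁ B₂ C₁ f w x) {u v : ℝ} (hu : 0 ≤ u) (hv : 0 ≤ v) :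
    IntervalIntegrable (fun τ => A *ᵥ x τ + B₁ *ᵥ f (C₁ *ᵥ x τ) + B₂ *ᵥ w τ) volume u v := by
  have hc : ContinuousOn (fun τ => A *ᵥ x τ + B₁ *ᵥ f (C₁ *ᵥ x τ)) (Ici 0) := by
    have := hx.1
    fun_prop
  exact ((hc.locallyIntegrableOn measurableSet_Ici).intervalIntegrable_of_nonneg hu hv).add
    ((hw.intervalIntegrable_of_nonneg hu hv).mulVec B₂)

theorem IsTrajectory.sub_eq_intervalIntegral (hf : Continuous f)
    (hw : LocallyIntegrableOn w (Ici 0)) (hx : IsTrajectory A B₁ B₂ C₁ f w x) {u v : ℝ}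
    (hu : 0 ≤ u) (hv : 0 ≤ v) :
    x v - x u = ∫ τ in u..v, (A *ᵥ x τ + B₁ *ᵥ f (C₁ *ᵥ x τ) + B₂ *ᵥ w τ) := by
  rw [hx.2 v hv, hx.2 u hu, add_sub_add_left_eq_sub,
    intervalIntegral.integral_interval_sub_left (hx.intervalIntegrable hf hw le_rfl hv)
      (hx.intervalIntegrable hf hw le_rfl hu)]

theorem IsTrajectory.dotProduct_abs_sub_le_add_integral {Δ : Matrix (Fin m₁) (Fin p₁) ℝ}
    (hA : IsMetzler A) (hB₁ : ∀ i j, 0 ≤ B₁ i j) (hB₂ : ∀ i j, 0 ≤ B₂ i j)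
    (hC₁ : ∀ i j, 0 ≤ C₁ i j) (hΔ : ∀ i j, 0 ≤ Δ i j)
    (hf : ∀ ζ₁ ζ₂, |f ζ₁ - f ζ₂| ≤ Δ *ᵥ |ζ₁ - ζ₂|) {ξ : ℝ} {p : Fin n → ℝ} (hp : 0 ≤ p)
    (hH1 : ∀ j, vecMul p (A + B₁ * Δ * C₁) j ≤ -(ξ * p j))
    {w_a w_b : ℝ → Fin m₂ → ℝ} {x_a x_b : ℝ → Fin n → ℝ}
    (hwa : LocallyIntegrableOn w_a (Ici 0)) (hwb : LocallyIntegrableOn w_b (Ici 0))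
    (ha : IsTrajectory A B₁ B₂ C₁ f w_a x_a) (hb : IsTrajectory A B₁ B₂ C₁ f w_b x_b)
    {t₁ t₂ : ℝ} (ht₁ : 0 ≤ t₁) (ht₁₂ : t₁ ≤ t₂) :
    p ⬝ᵥ |x_a t₂ - x_b t₂| ≤ p ⬝ᵥ |x_a t₁ - x_b t₁| + ∫ τ in t₁..t₂,
      (-ξ * (p ⬝ᵥ |x_a τ - x_b τ|) + p ⬝ᵥ (B₂ *ᵥ 1) * ‖w_a τ - w_b τ‖) := by
  have hfc := continuous_of_abs_sub_le_mulVec hΔ hf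
  have hz : ContinuousOn (fun τ => x_a τ - x_b τ) (Ici 0) := ha.1.sub hb.1
  have hV := ha.1.dotProduct_abs_sub p hb.1
  have hψ : ∀ u v, 0 ≤ u → 0 ≤ v → IntervalIntegrable
      (fun τ => -ξ * (p ⬝ᵥ |x_a τ - x_b τ|) + p ⬝ᵥ (B₂ *ᵥ 1) * ‖w_a τ - w_b τ‖) volume u v :=
    fun u v hu hv => (((hV.locallyIntegrableOn measurableSet_Ici).intervalIntegrable_of_nonneg
      hu hv).const_mul (-ξ)).add
      (((hwa.sub hwb).intervalIntegrable_of_nonneg hu hv).norm.const_mul _)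
  refine le_add_intervalIntegral_of_eventually_le ht₁₂ (hV.mono (Icc_subset_Ici_iff ht₁₂ |>.2 ht₁))
    (hψ _ _ ht₁ (ht₁.trans ht₁₂)) fun a ha' ε hε => ?_
  have ha0 : 0 ≤ a := ht₁.trans ha'.1
  refine eventually_dotProduct_abs_sub_le (z := fun τ => x_a τ - x_b τ)
    (h := fun τ => (A *ᵥ x_a τ + B₁ *ᵥ f (C₁ *ᵥ x_a τ) + B₂ *ᵥ w_a τ) -
      (A *ᵥ x_b τ + B₁ *ᵥ f (C₁ *ᵥ x_b τ) + B₂ *ᵥ w_b τ))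
    (K := 2 * ∑ i, p i * |A i i|) hp ?_ hε
    ((hz a ha0).mono (Ici_subset_Ici.2 ha0))
    (fun u hu => ?_) (fun u hu => ?_) (fun u hu => hψ a u ha0 (ha0.trans hu))
    (fun τ hτ σ w hσ hσw => ?_)
  · exact mul_nonneg two_pos.le (Finset.sum_nonneg fun i _ => mul_nonneg (hp i) (abs_nonneg _))
  · rw [sub_sub_sub_comm, ha.sub_eq_intervalIntegral hfc hwa ha0 (ha0.trans hu),
      hb.sub_eq_intervalIntegral hfc hwb ha0 (ha0.trans hu), ← intervalIntegral.integral_sub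
      (ha.intervalIntegrable hfc hwa ha0 (ha0.trans hu))
      (hb.intervalIntegrable hfc hwb ha0 (ha0.trans hu))]
  · exact (ha.intervalIntegrable hfc hwa ha0 (ha0.trans hu)).sub
      (hb.intervalIntegrable hfc hwb ha0 (ha0.trans hu))
  · have he : |f (C₁ *ᵥ x_a τ) - f (C₁ *ᵥ x_b τ)| ≤ Δ *ᵥ |C₁ *ᵥ (x_a τ - x_b τ)| := by
      simpa only [mulVec_sub] using hf (C₁ *ᵥ x_a τ) (C₁ *ᵥ x_b τ)
    convert dotProduct_mul_lure_le hA hB₁ hB₂ hC₁ hΔ hp hH1 he (w_a τ - w_b τ) hσ hσw using 3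
    simp only [mulVec_sub]
    abel

end Trajectory

section Decay

variable {V g : ℝ → ℝ} {ξ : ℝ}

theorem le_add_intervalIntegral_of_le_add_integral_neg_mul (hξ : 0 ≤ ξ)
    (hV : LocallyIntegrableOn V (Ici 0)) (hg : LocallyIntegrableOn g (Ici 0))
    (hV0 : ∀ t, 0 ≤ V t)
    (hVg : ∀ t₁ t₂, 0 ≤ t₁ → t₁ ≤ t₂ → V t₂ ≤ V t₁ + ∫ τ in t₁..t₂, (-ξ * V τ + g τ))
    {t₁ t₂ : ℝ} (ht₁ : 0 ≤ t₁) (ht₁₂ : t₁ ≤ t₂) :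
    V t₂ ≤ V t₁ + ∫ τ in t₁..t₂, g τ := by
  have ht₂ := ht₁.trans ht₁₂
  have hgi := hg.intervalIntegrable_of_nonneg ht₁ ht₂
  have := intervalIntegral.integral_mono_on ht₁₂
    (((hV.intervalIntegrable_of_nonneg ht₁ ht₂).const_mul (-ξ)).add hgi) hgi
    fun τ _ => by nlinarith [hV0 τ]
  linarith [hVg t₁ t₂ ht₁ ht₁₂]

theorem le_inv_one_add_mul_add_intervalIntegral (hξ : 0 ≤ ξ)
    (hV : LocallyIntegrableOn V (Ici 0)) (hg : LocallyIntegrableOn g (Ici 0))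
    (hV0 : ∀ t, 0 ≤ V t) (hg0 : ∀ t, 0 ≤ g t)
    (hVg : ∀ t₁ t₂, 0 ≤ t₁ → t₁ ≤ t₂ → V t₂ ≤ V t₁ + ∫ τ in t₁..t₂, (-ξ * V τ + g τ))
    {t : ℝ} (ht : 0 ≤ t) :
    V (t + 1) ≤ (1 + ξ)⁻¹ * V t + ∫ τ in t..t + 1, g τ := by
  have ht₁ : 0 ≤ t + 1 := by linarith
  have hVi := hV.intervalIntegrable_of_nonneg ht ht₁
  have hgi := hg.intervalIntegrable_of_nonneg ht ht₁
  set G := ∫ τ in t..t + 1, g τ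
  have hlow : ∀ τ ∈ Icc t (t + 1), V (t + 1) - G ≤ V τ := fun τ hτ => by
    have := le_add_intervalIntegral_of_le_add_integral_neg_mul hξ hV hg hV0 hVg
      (ht.trans hτ.1) hτ.2
    have : ∫ r in τ..t + 1, g r ≤ G := intervalIntegral.integral_mono_interval hτ.1 hτ.2 le_rfl
      (Eventually.of_forall hg0) hgi
    linarith
  have hmean : V (t + 1) - G ≤ ∫ τ in t..t + 1, V τ := by
    simpa using intervalIntegral.integral_mono_on (by linarith) intervalIntegrable_const hVi hlow
  have hstep := hVg t (t + 1) ht (by linarith)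
  rw [intervalIntegral.integral_add (hVi.const_mul _) hgi, intervalIntegral.integral_const_mul]
    at hstep
  rw [inv_mul_eq_div, ← sub_le_iff_le_add, le_div_iff₀ (by linarith)]
  nlinarith [mul_le_mul_of_nonneg_left hmean hξ]

theorem exists_le_mul_pow_of_le_mul_add_mul_pow {a : ℕ → ℝ} {θ ρ K : ℝ} (hθ0 : 0 ≤ θ)
    (hθ1 : θ < 1) (hρ0 : 0 ≤ ρ) (hρ1 : ρ < 1) (hK : 0 ≤ K)
    (ha : ∀ k, a (k + 1) ≤ θ * a k + K * ρ ^ k) :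
    ∃ C r, 0 ≤ C ∧ ρ ≤ r ∧ 0 < r ∧ r < 1 ∧ ∀ k, a k ≤ C * r ^ k := by
  obtain ⟨r, hr, hr1⟩ := exists_between (max_lt hθ1 hρ1)
  obtain ⟨hθr, hρr⟩ := max_lt_iff.1 hr
  have hr0 : 0 < r := hθ0.trans_lt hθr
  set C := max (a 0) (K / (r - θ))
  have hKC : K ≤ (r - θ) * C := by
    rw [← div_le_iff₀' (sub_pos.2 hθr)]
    exact le_max_right _ _
  refine ⟨C, r, (div_nonneg hK (sub_pos.2 hθr).le).trans (le_max_right _ _), hρr.le,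
    hr0, hr1, fun k => ?_⟩
  induction k with
  | zero => simp [C]
  | succ k ih =>
    calc a (k + 1) ≤ θ * (C * r ^ k) + K * r ^ k :=
          (ha k).trans (add_le_add (mul_le_mul_of_nonneg_left ih hθ0)
            (mul_le_mul_of_nonneg_left (pow_le_pow_left₀ hρ0 hρr.le k) hK))
      _ ≤ θ * (C * r ^ k) + (r - θ) * C * r ^ k := by gcongr
      _ = C * r ^ (k + 1) := by ring

theorem pow_floor_le_inv_mul_rpow {r t : ℝ} (hr0 : 0 < r) (hr1 : r ≤ 1) :
    r ^ ⌊t⌋₊ ≤ r⁻¹ * r ^ t := by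
  rw [← Real.rpow_natCast, inv_mul_eq_div, ← Real.rpow_sub_one hr0.ne']
  exact Real.rpow_le_rpow_of_exponent_ge hr0 hr1 (by linarith [Nat.lt_floor_add_one t])

theorem exists_exp_decay_of_le_add_integral {K ρ : ℝ} (hξ : 0 < ξ)
    (hK : 0 ≤ K) (hρ0 : 0 ≤ ρ) (hρ1 : ρ < 1)
    (hV : LocallyIntegrableOn V (Ici 0)) (hg : LocallyIntegrableOn g (Ici 0))
    (hV0 : ∀ t, 0 ≤ V t) (hg0 : ∀ t, 0 ≤ g t)
    (hVg : ∀ t₁ t₂, 0 ≤ t₁ → t₁ ≤ t₂ → V t₂ ≤ V t₁ + ∫ τ in t₁..t₂, (-ξ * V τ + g τ))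
    (hgk : ∀ k : ℕ, ∫ τ in k..k + 1, g τ ≤ K * ρ ^ k) :
    ∃ M : ℝ, 0 ≤ M ∧ ∃ β : ℝ, 0 < β ∧ ∀ t : ℝ, 0 ≤ t → V t ≤ M * Real.exp (-β * t) := by
  obtain ⟨C, r, hC, hρr, hr0, hr1, hVk⟩ :=
    exists_le_mul_pow_of_le_mul_add_mul_pow (a := fun k : ℕ => V k) (θ := (1 + ξ)⁻¹)
      (inv_nonneg.2 (by linarith))
      (inv_lt_one_of_one_lt₀ (by linarith)) hρ0 hρ1 hK fun k => by
        simpa only [Nat.cast_succ] using (le_inv_one_add_mul_add_intervalIntegral hξ.le hV hg hV0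
          hg0 hVg k.cast_nonneg).trans (add_le_add le_rfl (hgk k))
  refine ⟨(C + K) * r⁻¹, by positivity, -Real.log r, neg_pos.2 (Real.log_neg hr0 hr1),
    fun t ht => ?_⟩
  have hk := Nat.floor_le ht
  calc V t ≤ V ⌊t⌋₊ + ∫ τ in (⌊t⌋₊ : ℝ)..⌊t⌋₊ + 1, g τ :=
        (le_add_intervalIntegral_of_le_add_integral_neg_mul hξ.le hV hg hV0 hVg
          (Nat.cast_nonneg _) hk).trans (add_le_add le_rfl (intervalIntegral.integral_mono_interval
          le_rfl hk (Nat.lt_floor_add_one t).le (Eventually.of_forall hg0)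
          (hg.intervalIntegrable_of_nonneg (Nat.cast_nonneg _) (by positivity))))
    _ ≤ C * r ^ ⌊t⌋₊ + K * r ^ ⌊t⌋₊ :=
        add_le_add (hVk _) ((hgk _).trans (by gcongr))
    _ ≤ (C + K) * (r⁻¹ * r ^ t) := by
        rw [← add_mul]
        gcongr
        exact pow_floor_le_inv_mul_rpow hr0 hr1.le
    _ = (C + K) * r⁻¹ * Real.exp (-(-Real.log r) * t) := by
        rw [Real.rpow_def_of_pos hr0, neg_neg, mul_assoc]

end Decay

theorem le_one_add_rpow {q s : ℝ} (hq : 0 ≤ q) (hs : 1 ≤ s) : q ≤ 1 + q ^ s := by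
  rcases le_total q 1 with h | h
  · linarith [Real.rpow_nonneg hq s]
  · linarith [Real.self_le_rpow_of_one_le h hs]

theorem intervalIntegral_norm_le_mul_exp_pow {E : Type*} [NormedAddCommGroup E]
    [NormedSpace ℝ E] {φ : ℝ → E} {γ s : ℝ} (hγ : 0 ≤ γ) (hs : 1 ≤ s)
    (hφ : LocallyIntegrableOn φ (Ici 0))
    (hφs : IntegrableOn (fun t => ‖Real.exp (γ * t) • φ t‖ ^ s) (Ici 0)) (k : ℕ) :
    ∫ t in k..k + 1, ‖φ t‖ ≤
      (1 + ∫ t in Ici 0, ‖Real.exp (γ * t) • φ t‖ ^ s) * Real.exp (-γ) ^ k := by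
  set q := fun t => ‖Real.exp (γ * t) • φ t‖ ^ s
  have hk : (0 : ℝ) ≤ k := k.cast_nonneg
  have hk1 : (k : ℝ) ≤ k + 1 := by linarith
  have hq0 : ∀ t, 0 ≤ q t := fun t => Real.rpow_nonneg (norm_nonneg _) s
  have hqi : IntervalIntegrable q volume k (k + 1) :=
    (hφs.mono_set fun _ hx => (le_min hk (by linarith)).trans hx.1).intervalIntegrable
  have hpt : ∀ t ∈ Icc (k : ℝ) (k + 1), ‖φ t‖ ≤ Real.exp (-γ) ^ k * (1 + q t) := fun t ht => by
    have hnorm : ‖φ t‖ = Real.exp (-(γ * t)) * ‖Real.exp (γ * t) • φ t‖ := by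
      rw [norm_smul, Real.norm_of_nonneg (Real.exp_pos _).le, ← mul_assoc, ← Real.exp_add,
        neg_add_cancel, Real.exp_zero, one_mul]
    rw [hnorm, ← Real.exp_nat_mul]
    gcongr
    · nlinarith [ht.1]
    · exact le_one_add_rpow (norm_nonneg _) hs
  calc ∫ t in k..k + 1, ‖φ t‖ ≤ ∫ t in k..k + 1, Real.exp (-γ) ^ k * (1 + q t) :=
        intervalIntegral.integral_mono_on hk1
          (hφ.intervalIntegrable_of_nonneg hk (by linarith)).norm
          ((intervalIntegrable_const.add hqi).const_mul _) hpt
    _ = Real.exp (-γ) ^ k * (1 + ∫ t in k..k + 1, q t) := by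
        rw [intervalIntegral.integral_const_mul, intervalIntegral.integral_add
          intervalIntegrable_const hqi, intervalIntegral.integral_const, smul_eq_mul,
          add_sub_cancel_left, one_mul]
    _ ≤ Real.exp (-γ) ^ k * (1 + ∫ t in Ici 0, q t) := by
        gcongr
        rw [intervalIntegral.integral_of_le hk1]
        exact setIntegral_mono_set hφs (Eventually.of_forall hq0)
          (Eventually.of_forall fun _ hx => hk.trans hx.1.le)
    _ = _ := mul_comm _ _

theorem norm_le_sum_inv_mul_dotProduct_abs {ι : Type*} [Fintype ι] {p : ι → ℝ}
    (hp : ∀ i, 0 < p i) (v : ι → ℝ) : ‖v‖ ≤ (∑ i, (p i)⁻¹) * (p ⬝ᵥ |v|) := by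
  have hterm : ∀ j ∈ Finset.univ, 0 ≤ p j * |v j| := fun j _ =>
    mul_nonneg (hp j).le (abs_nonneg _)
  have hS : 0 ≤ p ⬝ᵥ |v| := Finset.sum_nonneg hterm
  have hinv : ∀ j ∈ Finset.univ, 0 ≤ (p j)⁻¹ := fun j _ => (inv_pos.2 (hp j)).le
  refine (pi_norm_le_iff_of_nonneg (mul_nonneg (Finset.sum_nonneg hinv) hS)).2 fun i => ?_
  calc ‖v i‖ = (p i)⁻¹ * (p i * |v i|) := by
        rw [Real.norm_eq_abs, inv_mul_cancel_left₀ (hp i).ne']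
    _ ≤ (p i)⁻¹ * (p ⬝ᵥ |v|) := mul_le_mul_of_nonneg_left
        (Finset.single_le_sum (f := fun j => p j * |v j|) hterm (Finset.mem_univ i))
        (hinv i (Finset.mem_univ i))
    _ ≤ (∑ j, (p j)⁻¹) * (p ⬝ᵥ |v|) := mul_le_mul_of_nonneg_right
        (Finset.single_le_sum (f := fun j => (p j)⁻¹) hinv (Finset.mem_univ i)) hS

theorem stmt13_general {n m₁ m₂ p₁ : ℕ}
    (A : Matrix (Fin n) (Fin n) ℝ) (B₁ : Matrix (Fin n) (Fin m₁) ℝ)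
    (B₂ : Matrix (Fin n) (Fin m₂) ℝ) (C₁ : Matrix (Fin p₁) (Fin n) ℝ)
    -- (A1)
    (hA : IsMetzler A) (hB₁ : ∀ i j, 0 ≤ B₁ i j) (hB₂ : ∀ i j, 0 ≤ B₂ i j)
    (hC₁ : ∀ i j, 0 ≤ C₁ i j)
    -- (A2), time-independent
    (f : (Fin p₁ → ℝ) → Fin m₁ → ℝ) (Δ : Matrix (Fin m₁) (Fin p₁) ℝ)
    (hΔ : ∀ i j, 0 ≤ Δ i j)
    (hf_inc : ∀ ζ₁ ζ₂ : Fin p₁ → ℝ,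
        ∀ i, |f ζ₁ i - f ζ₂ i| ≤ Δ.mulVec (fun j => |ζ₁ j - ζ₂ j|) i)
    -- (H1)
    (ξ : ℝ) (hξ : 0 < ξ) (p : Fin n → ℝ) (hp : ∀ i, 0 < p i)
    (hH1 : ∀ j, vecMul p (A + B₁ * Δ * C₁) j ≤ -(ξ * p j))
    -- two trajectories
    (w_a w_b : ℝ → Fin m₂ → ℝ) (x_a x_b : ℝ → Fin n → ℝ)
    (hwa : LocallyIntegrableOn w_a (Set.Ici 0) volume)
    (hwb : LocallyIntegrableOn w_b (Set.Ici 0) volume)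
    (ha : IsTrajectory A B₁ B₂ C₁ f w_a x_a)
    (hb : IsTrajectory A B₁ B₂ C₁ f w_b x_b)
    -- t ↦ e^{γt}(w_a − w_b)(t) ∈ L^s(ℝ₊, ℝ^{m₂}) for some γ > 0
    (s : ℝ) (hs : 1 ≤ s) (γ : ℝ) (hγ : 0 < γ)
    (hLs : IntegrableOn (fun t => ‖Real.exp (γ * t) • (w_a t - w_b t)‖ ^ s)
      (Set.Ici 0) volume) :
    ∃ M : ℝ, 0 ≤ M ∧ ∃ β : ℝ, 0 < β ∧
      ∀ t : ℝ, 0 ≤ t → ‖x_a t - x_b t‖ ≤ M * Real.exp (-β * t) := by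
  have hp0 : 0 ≤ p := fun i => (hp i).le
  have hc : 0 ≤ p ⬝ᵥ (B₂ *ᵥ 1) :=
    dotProduct_nonneg_of_nonneg hp0 fun i => dotProduct_nonneg_of_nonneg (hB₂ i) zero_le_one
  have hI : 0 ≤ ∫ t in Ici 0, ‖Real.exp (γ * t) • (w_a t - w_b t)‖ ^ s :=
    setIntegral_nonneg measurableSet_Ici fun t _ => Real.rpow_nonneg (norm_nonneg _) s
  have hforcing : ∀ k : ℕ, ∫ τ in k..k + 1, p ⬝ᵥ (B₂ *ᵥ 1) * ‖w_a τ - w_b τ‖ ≤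
      p ⬝ᵥ (B₂ *ᵥ 1) * (1 + ∫ t in Ici 0, ‖Real.exp (γ * t) • (w_a t - w_b t)‖ ^ s) *
        Real.exp (-γ) ^ k := fun k => by
    rw [intervalIntegral.integral_const_mul, mul_assoc]
    exact mul_le_mul_of_nonneg_left
      (intervalIntegral_norm_le_mul_exp_pow hγ.le hs (hwa.sub hwb) hLs k) hc
  obtain ⟨M, hM, β, hβ, hdecay⟩ := exists_exp_decay_of_le_add_integral hξ
    (mul_nonneg hc (add_nonneg zero_le_one hI)) (Real.exp_pos _).le
    (Real.exp_lt_one_iff.2 (neg_neg_of_pos hγ))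
    ((ha.1.dotProduct_abs_sub p hb.1).locallyIntegrableOn measurableSet_Ici)
    ((hwa.sub hwb).norm.smul (p ⬝ᵥ (B₂ *ᵥ 1)))
    (fun t => dotProduct_nonneg_of_nonneg hp0 fun i => abs_nonneg _)
    (fun t => mul_nonneg hc (norm_nonneg _))
    (fun t₁ t₂ => IsTrajectory.dotProduct_abs_sub_le_add_integral hA hB₁ hB₂ hC₁ hΔ
      (fun ζ₁ ζ₂ i => hf_inc ζ₁ ζ₂ i) hp0 hH1 hwa hwb ha hb) hforcing
  have hS : 0 ≤ ∑ i, (p i)⁻¹ := Finset.sum_nonneg fun i _ => (inv_pos.2 (hp i)).le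
  refine ⟨(∑ i, (p i)⁻¹) * M, mul_nonneg hS hM, β, hβ, fun t ht => ?_⟩
  calc ‖x_a t - x_b t‖ ≤ (∑ i, (p i)⁻¹) * (p ⬝ᵥ |x_a t - x_b t|) :=
        norm_le_sum_inv_mul_dotProduct_abs hp _
    _ ≤ (∑ i, (p i)⁻¹) * (M * Real.exp (-β * t)) := mul_le_mul_of_nonneg_left (hdecay t ht) hS
    _ = (∑ i, (p i)⁻¹) * M * Real.exp (-β * t) := (mul_assoc _ _ _).symm

/-- if `t ↦ e^{γt}(w_a − w_b)(t)` is in `L^s`, `1 ≤ s < ∞`, for some `γ > 0`,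
then `x_a(t) − x_b(t) → 0` exponentially as `t → ∞`. -/
theorem stmt13 {n m₁ m₂ p₁ : ℕ}
    (A : Matrix (Fin n) (Fin n) ℝ) (B₁ : Matrix (Fin n) (Fin m₁) ℝ)
    (B₂ : Matrix (Fin n) (Fin m₂) ℝ) (C₁ : Matrix (Fin p₁) (Fin n) ℝ)
    -- (A1)
    (hA : IsMetzler A) (hB₁ : ∀ i j, 0 ≤ B₁ i j) (hB₂ : ∀ i j, 0 ≤ B₂ i j)
    (hC₁ : ∀ i j, 0 ≤ C₁ i j)
    -- (A2), time-independent
    (f : (Fin p₁ → ℝ) → Fin m₁ → ℝ) (Δ : Matrix (Fin m₁) (Fin p₁) ℝ)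
    (hΔ : ∀ i j, 0 ≤ Δ i j)
    (hf_inc : ∀ ζ₁ ζ₂ : Fin p₁ → ℝ,
        ∀ i, |f ζ₁ i - f ζ₂ i| ≤ Δ.mulVec (fun j => |ζ₁ j - ζ₂ j|) i)
    -- (H1)
    (ξ : ℝ) (hξ : 0 < ξ) (p : Fin n → ℝ) (hp : ∀ i, 0 < p i)
    (hH1 : ∀ j, vecMul p (A + B₁ * Δ * C₁) j ≤ -(ξ * p j))
    -- two trajectories
    (w_a w_b : ℝ → Fin m₂ → ℝ) (x_a x_b : ℝ → Fin n → ℝ)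
    (hwa : LocallyIntegrableOn w_a (Set.Ici 0) volume)
    (hwb : LocallyIntegrableOn w_b (Set.Ici 0) volume)
    (ha : IsTrajectory A B₁ B₂ C₁ f w_a x_a)
    (hb : IsTrajectory A B₁ B₂ C₁ f w_b x_b)
    -- t ↦ e^{γt}(w_a − w_b)(t) ∈ L^s(ℝ₊, ℝ^{m₂}) for some γ > 0
    (s : ℝ) (hs : 1 ≤ s) (γ : ℝ) (hγ : 0 < γ)
    (hmeas : AEStronglyMeasurable (fun t => w_a t - w_b t) (volume.restrict (Set.Ici 0)))
    (hLs : IntegrableOn (fun t => ‖Real.exp (γ * t) • (w_a t - w_b t)‖ ^ s)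
      (Set.Ici 0) volume) :
    ∃ M : ℝ, 0 ≤ M ∧ ∃ β : ℝ, 0 < β ∧
      ∀ t : ℝ, 0 ≤ t → ‖x_a t - x_b t‖ ≤ M * Real.exp (-β * t) :=
  stmt13_general A B₁ B₂ C₁ hA hB₁ hB₂ hC₁ f Δ hΔ hf_inc ξ hξ p hp hH1 w_a w_b x_a x_b hwa hwb ha hb
    s hs γ hγ hLs
end
end

section
/- Let A ∈ ℝ^{n×n} be Metzler and Hurwitz, and let B₁ ∈ ℝ^{n×m₁} and C₁ ∈ ℝ^{p₁×n} be entrywise nonnegative. Then for every λ ∈ ℂ with Re λ ≥ 0, the matrix λI − A is invertible and the entrywise modulus of G₁₁(λ) := C₁(λI − A)^{-1}B₁ satisfies |G₁₁(λ)| ≤ G₁₁(0) entrywise, where G₁₁(0) := C₁(−A)^{-1}B₁. Consequently, for every entrywise nonnegative Δ ∈ ℝ^{m₁×p₁} and every λ with Re λ ≥ 0, the spectral radius satisfies ρ(G₁₁(λ)Δ) ≤ ρ(G₁₁(0)Δ). -/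
/-!
Shift `A` to `N = A + c I` with `c` so large that `N` is entrywise nonnegative and, since every
eigenvalue of `A` has negative real part, every eigenvalue `μ + c` of `N` lies in the open disc
of radius `c`. Then `λ I - A = s I - N` with `s = λ + c` and `‖s‖ ≥ Re s ≥ c > ρ(N)`, so the
Neumann series `(s I - N)⁻¹ = ∑ s⁻ᵏ⁻¹ Nᵏ` converges and is dominated entrywise by
`∑ c⁻ᵏ⁻¹ Nᵏ = (c I - N)⁻¹ = (-A)⁻¹`. Entrywise domination survives products with the nonnegative
`C₁`, `B₁`, `Δ`, and it bounds spectral radii through Gelfand's formula for the `ℓ∞` operator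
norm, which is monotone in the moduli of the entries.
-/

open Matrix

noncomputable section

open Filter
open scoped ENNReal

section NeumannSeries

variable {A : Type*} [NormedRing A] [NormedAlgebra ℂ A] [CompleteSpace A]

theorem hasSum_inverse_one_sub_smul_of_lt_inv_spectralRadius {a : A} {z : ℂ}
    (h : (‖z‖₊ : ℝ≥0∞) < (spectralRadius ℂ a)⁻¹) :
    HasSum (fun n => z ^ n • a ^ n) (Ring.inverse (1 - z • a)) := by
  obtain ⟨r, hzr, hr⟩ := ENNReal.lt_iff_exists_nnreal_btwn.1 h
  have hseries := (spectrum.hasFPowerSeriesOnBall_inverse_one_sub_smul ℂ a).exchange_radius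
    ((spectrum.differentiableOn_inverse_one_sub_smul hr).hasFPowerSeriesOnBall
      (ENNReal.coe_pos.1 (pos_of_gt hzr)))
  simpa [ContinuousMultilinearMap.mkPiRing_apply] using
    hseries.hasSum (y := z) (by rwa [Metric.mem_eball, edist_zero_right])

theorem hasSum_resolvent_of_spectralRadius_lt {a : A} {s : ℂ}
    (h : spectralRadius ℂ a < ‖s‖₊) :
    HasSum (fun n => s⁻¹ ^ (n + 1) • a ^ n) (resolvent a s) := by
  have hs : s ≠ 0 := by
    rintro rfl
    simp at h
  have hinv : (‖s⁻¹‖₊ : ℝ≥0∞) < (spectralRadius ℂ a)⁻¹ := by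
    rw [nnnorm_inv, ENNReal.coe_inv (by simpa using hs)]
    exact ENNReal.inv_lt_inv.2 h
  have h_resolvent : resolvent a s = s⁻¹ • Ring.inverse (1 - s⁻¹ • a) := by
    rw [eq_inv_smul_iff₀ hs]
    simpa [resolvent, Units.smul_def] using
      spectrum.units_smul_resolvent_self (r := Units.mk0 s hs) (a := a)
  rw [h_resolvent]
  simpa only [smul_smul, pow_succ'] using
    (hasSum_inverse_one_sub_smul_of_lt_inv_spectralRadius hinv).const_smul s⁻¹

end NeumannSeries

theorem spectralRadius_lt_nnnorm {𝕜 A : Type*} [NormedField 𝕜] [Ring A] [Algebra 𝕜 A] {a : A}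
    {c : ℝ} (h : spectralRadius 𝕜 a < ENNReal.ofReal c) {z : 𝕜} (hz : c ≤ ‖z‖) :
    spectralRadius 𝕜 a < ‖z‖₊ :=
  h.trans_le (by rw [← enorm_eq_nnnorm, ← ofReal_norm]; exact ENNReal.ofReal_le_ofReal hz)

theorem Complex.eventually_norm_add_ofReal_lt {μ : ℂ} (hμ : μ.re < 0) :
    ∀ᶠ c : ℝ in atTop, ‖μ + c‖ < c := by
  filter_upwards [eventually_gt_atTop 0, eventually_gt_atTop (‖μ‖ ^ 2 / (-2 * μ.re))]
    with c hc0 hc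
  rw [div_lt_iff₀ (by linarith), Complex.sq_norm, Complex.normSq_apply] at hc
  have h_sq : ‖μ + c‖ ^ 2 < c ^ 2 := by
    rw [Complex.sq_norm, Complex.normSq_apply]
    simp only [add_re, ofReal_re, add_im, ofReal_im, add_zero]
    nlinarith
  exact lt_of_pow_lt_pow_left₀ 2 hc0.le h_sq

theorem eventually_spectralRadius_add_algebraMap_lt {A : Type*} [NormedRing A]
    [NormedAlgebra ℂ A] [CompleteSpace A] {a : A} (h_fin : (spectrum ℂ a).Finite)
    (h_re : ∀ μ ∈ spectrum ℂ a, μ.re < 0) :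
    ∀ᶠ c : ℝ in atTop, spectralRadius ℂ (a + algebraMap ℂ A c) < ENNReal.ofReal c := by
  filter_upwards [eventually_gt_atTop 0, h_fin.eventually_all.2
    fun μ hμ => Complex.eventually_norm_add_ofReal_lt (h_re μ hμ)] with c hc0 hc
  have h_shift : spectrum ℂ (a + algebraMap ℂ A c) = (· + (c : ℂ)) '' spectrum ℂ a := by
    rw [← spectrum.add_singleton_eq, Set.add_singleton]
  rcases (spectrum ℂ a).eq_empty_or_nonempty with h_empty | h_ne
  · simpa [spectralRadius, h_shift, h_empty] using hc0
  · rw [ENNReal.ofReal]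
    refine spectrum.spectralRadius_lt_of_forall_lt_of_nonempty (h_shift ▸ h_ne.image _) ?_
    rw [h_shift]
    rintro _ ⟨μ, hμ, rfl⟩
    rw [← NNReal.coe_lt_coe, coe_nnnorm, Real.coe_toNNReal _ hc0.le]
    exact hc μ hμ

section EntrywiseDomination

variable {l m n R : Type*} [Fintype m] [NormedRing R]

theorem Matrix.norm_mul_apply_le {M : Matrix l m R} {M' : Matrix m n R} {P : Matrix l m ℝ}
    {P' : Matrix m n ℝ} (h : ∀ i j, ‖M i j‖ ≤ P i j) (h' : ∀ i j, ‖M' i j‖ ≤ P' i j) (i : l)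
    (j : n) : ‖(M * M') i j‖ ≤ (P * P') i j :=
  calc ‖(M * M') i j‖ ≤ ∑ k, ‖M i k‖ * ‖M' k j‖ :=
        (norm_sum_le _ _).trans (Finset.sum_le_sum fun _ _ => norm_mul_le _ _)
    _ ≤ (P * P') i j :=
        Finset.sum_le_sum fun k _ => mul_le_mul (h i k) (h' k j) (norm_nonneg _)
          ((norm_nonneg _).trans (h i k))

theorem Matrix.norm_pow_apply_le [DecidableEq m] [NormOneClass R] {M : Matrix m m R}
    {P : Matrix m m ℝ} (h : ∀ i j, ‖M i j‖ ≤ P i j) (k : ℕ) (i j : m) :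
    ‖(M ^ k) i j‖ ≤ (P ^ k) i j := by
  induction k generalizing i j with
  | zero => by_cases hij : i = j <;> simp [hij]
  | succ k ih => simpa only [pow_succ] using norm_mul_apply_le ih h i j

end EntrywiseDomination

section RealMatrices

variable {m n : Type*}

theorem Matrix.norm_map_ofReal_apply_le {P : Matrix m n ℝ} (hP : ∀ i j, 0 ≤ P i j) (i : m)
    (j : n) : ‖P.map ((↑) : ℝ → ℂ) i j‖ ≤ P i j := by
  simp [abs_of_nonneg (hP i j)]

variable [Fintype n] [DecidableEq n]

theorem Matrix.map_ofReal_pow (P : Matrix n n ℝ) (k : ℕ) :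
    (P ^ k).map ((↑) : ℝ → ℂ) = P.map (↑) ^ k :=
  map_pow Complex.ofRealHom.mapMatrix P k

theorem Matrix.map_ofReal_inv (P : Matrix n n ℝ) : P⁻¹.map ((↑) : ℝ → ℂ) = (P.map (↑))⁻¹ := by
  have h_adj : P.adjugate.map (↑) = (P.map ((↑) : ℝ → ℂ)).adjugate :=
    RingHom.map_adjugate Complex.ofRealHom P
  have h_det : (P.det : ℂ) = (P.map ((↑) : ℝ → ℂ)).det := RingHom.map_det Complex.ofRealHom P
  rw [inv_def, inv_def, ← h_adj, ← h_det]
  ext i j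
  simp [Ring.inverse_eq_inv']

theorem Matrix.map_ofReal_algebraMap (c : ℝ) :
    (algebraMap ℝ (Matrix n n ℝ) c).map ((↑) : ℝ → ℂ) = algebraMap ℂ _ (c : ℂ) := by
  rw [map_algebraMap _ _ Complex.ofReal_zero rfl, IsScalarTower.algebraMap_apply ℝ ℂ]
  rfl

theorem Matrix.map_ofReal_resolvent (P : Matrix n n ℝ) (c : ℝ) :
    (resolvent P c).map ((↑) : ℝ → ℂ) = resolvent (P.map (↑)) (c : ℂ) := by
  simp only [resolvent, ← nonsing_inv_eq_ringInverse, map_ofReal_inv,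
    Matrix.map_sub _ Complex.ofReal_sub, map_ofReal_algebraMap]

end RealMatrices

section SpectralRadius

attribute [local instance] Matrix.linftyOpSeminormedAddCommGroup Matrix.linftyOpNormedRing
  Matrix.linftyOpNormedAlgebra

theorem Matrix.linfty_opNNNorm_le_of_norm_apply_le {m n α : Type*} [Fintype m] [Fintype n]
    [SeminormedAddCommGroup α] {M M' : Matrix m n α} (h : ∀ i j, ‖M i j‖ ≤ ‖M' i j‖) :
    ‖M‖₊ ≤ ‖M'‖₊ := by
  simp only [linfty_opNNNorm_def]
  exact Finset.sup_mono_fun fun i _ => Finset.sum_le_sum fun j _ => h i j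

variable {n : Type*} [Fintype n] [DecidableEq n]

theorem Matrix.spectralRadius_le_of_norm_apply_le {M : Matrix n n ℂ} {P : Matrix n n ℝ}
    (h : ∀ i j, ‖M i j‖ ≤ P i j) :
    spectralRadius ℂ M ≤ spectralRadius ℂ (P.map ((↑) : ℝ → ℂ)) := by
  refine le_of_tendsto_of_tendsto'
    (spectrum.pow_nnnorm_pow_one_div_tendsto_nhds_spectralRadius M)
    (spectrum.pow_nnnorm_pow_one_div_tendsto_nhds_spectralRadius _) fun k => ?_
  gcongr
  refine linfty_opNNNorm_le_of_norm_apply_le fun i j => ?_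
  rw [← map_ofReal_pow, map_apply, Complex.norm_real]
  exact (norm_pow_apply_le h k i j).trans (le_abs_self _)

theorem Matrix.norm_resolvent_apply_le {N : Matrix n n ℝ} (hN : ∀ i j, 0 ≤ N i j) {c : ℝ}
    (hc : spectralRadius ℂ (N.map ((↑) : ℝ → ℂ)) < ENNReal.ofReal c) {s : ℂ} (hs : c ≤ ‖s‖)
    (i j : n) : ‖resolvent (N.map ((↑) : ℝ → ℂ)) s i j‖ ≤ resolvent N c i j := by
  have h_series : ∀ z : ℂ, c ≤ ‖z‖ → HasSum (fun k => z⁻¹ ^ (k + 1) * ((N ^ k) i j : ℂ))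
      (resolvent (N.map ((↑) : ℝ → ℂ)) z i j) := fun z hz => by
    have h := hasSum_resolvent_of_spectralRadius_lt (spectralRadius_lt_nnnorm hc hz)
    -- without the ascription, unifying the `ℓ∞` topology with the product topology times out
    simpa only [smul_apply, ← map_ofReal_pow, map_apply, smul_eq_mul] using
      (Pi.hasSum.1 (Pi.hasSum.1 h i) j :
        HasSum (fun k => (z⁻¹ ^ (k + 1) • (N.map ((↑) : ℝ → ℂ)) ^ k) i j) _)
  have h_series_c : HasSum (fun k => c⁻¹ ^ (k + 1) * (N ^ k) i j) (resolvent N c i j) := by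
    rw [← Complex.hasSum_ofReal, ← map_apply (f := ((↑) : ℝ → ℂ)), map_ofReal_resolvent]
    exact_mod_cast h_series c (by simpa using le_abs_self c)
  refine (h_series s hs).norm_le_of_bounded h_series_c fun k => ?_
  have hc0 : 0 < c := ENNReal.ofReal_pos.1 (pos_of_gt hc)
  have hNk := pow_apply_nonneg hN k i j
  rw [norm_mul, norm_pow, norm_inv, Complex.norm_real, Real.norm_of_nonneg hNk]
  gcongr

theorem IsHurwitz.eventually_spectralRadius_lt {n : ℕ} {A : Matrix (Fin n) (Fin n) ℝ}
    (hA : IsHurwitz A) : ∀ᶠ c : ℝ in atTop,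
      spectralRadius ℂ ((A + algebraMap ℝ _ c).map ((↑) : ℝ → ℂ)) < ENNReal.ofReal c := by
  filter_upwards [eventually_spectralRadius_add_algebraMap_lt
    (Matrix.finite_spectrum (A.map ((↑) : ℝ → ℂ))) hA] with c hc
  rwa [Matrix.map_add _ Complex.ofReal_add, map_ofReal_algebraMap]

end SpectralRadius

theorem IsMetzler.nonneg_add_algebraMap {n : ℕ} {A : Matrix (Fin n) (Fin n) ℝ} (hA : IsMetzler A)
    {c : ℝ} (hc : ∀ i, -A i i ≤ c) (i j : Fin n) : 0 ≤ (A + algebraMap ℝ _ c) i j := by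
  by_cases hij : i = j
  · subst hij
    simpa [algebraMap_eq_diagonal, neg_le_iff_add_nonneg'] using hc i
  · simpa [algebraMap_eq_diagonal, hij] using hA i j hij

/-- for `A` Metzler and Hurwitz and `B₁, C₁ ≥ 0`, for every `λ` with
`Re λ ≥ 0` the matrix `λI − A` is invertible, the entrywise modulus of
`G₁₁(λ) = C₁(λI−A)⁻¹B₁` is bounded by `G₁₁(0) = C₁(−A)⁻¹B₁`, and consequently
`ρ(G₁₁(λ)Δ) ≤ ρ(G₁₁(0)Δ)` for every entrywise nonnegative `Δ`. -/
theorem stmt19 {n m₁ p₁ : ℕ}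
    (A : Matrix (Fin n) (Fin n) ℝ) (B₁ : Matrix (Fin n) (Fin m₁) ℝ)
    (C₁ : Matrix (Fin p₁) (Fin n) ℝ)
    (hA : IsMetzler A) (hHur : IsHurwitz A)
    (hB₁ : ∀ i j, 0 ≤ B₁ i j) (hC₁ : ∀ i j, 0 ≤ C₁ i j) :
    ∀ lam : ℂ, 0 ≤ lam.re →
      IsUnit (lam • (1 : Matrix (Fin n) (Fin n) ℂ) - A.map (fun a => (a : ℂ))) ∧
      (∀ i j,
        ‖(C₁.map (fun a => (a : ℂ)) *
            (lam • (1 : Matrix (Fin n) (Fin n) ℂ) - A.map (fun a => (a : ℂ)))⁻¹ *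
            B₁.map (fun a => (a : ℂ))) i j‖ ≤ (C₁ * (-A)⁻¹ * B₁) i j) ∧
      (∀ Δ : Matrix (Fin m₁) (Fin p₁) ℝ, (∀ i j, 0 ≤ Δ i j) →
        spectralRadius ℂ
            ((C₁.map (fun a => (a : ℂ)) *
              (lam • (1 : Matrix (Fin n) (Fin n) ℂ) - A.map (fun a => (a : ℂ)))⁻¹ *
              B₁.map (fun a => (a : ℂ))) * Δ.map (fun a => (a : ℂ))) ≤
          spectralRadius ℂ (((C₁ * (-A)⁻¹ * B₁) * Δ).map (fun a => (a : ℂ)))) := by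
  intro lam hlam
  obtain ⟨c, hc_diag, hρ⟩ := ((eventually_all.2 fun i => eventually_ge_atTop (-A i i)).and
    hHur.eventually_spectralRadius_lt).exists
  set N := A + algebraMap ℝ (Matrix (Fin n) (Fin n) ℝ) c with hN_def
  have hs : c ≤ ‖lam + c‖ := by
    refine le_trans ?_ (Complex.re_le_norm _)
    simpa using hlam
  have h_shift : lam • 1 - A.map (↑) = algebraMap ℂ _ (lam + c) - N.map ((↑) : ℝ → ℂ) := by
    rw [hN_def, Matrix.map_add _ Complex.ofReal_add, map_ofReal_algebraMap, map_add,
      Algebra.algebraMap_eq_smul_one]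
    abel
  have h_neg : -A = algebraMap ℝ _ c - N := by
    rw [hN_def]
    abel
  have hunit : IsUnit (lam • (1 : Matrix (Fin n) (Fin n) ℂ) - A.map (fun a => (a : ℂ))) :=
    h_shift ▸ spectrum.notMem_iff.1 fun h =>
      (spectralRadius_lt_nnnorm hρ hs).not_ge (le_iSup₂ (α := ℝ≥0∞) _ h)
  have hG : ∀ i j, ‖(C₁.map (fun a => (a : ℂ)) *
      (lam • (1 : Matrix (Fin n) (Fin n) ℂ) - A.map (fun a => (a : ℂ)))⁻¹ *
      B₁.map (fun a => (a : ℂ))) i j‖ ≤ (C₁ * (-A)⁻¹ * B₁) i j := by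
    rw [h_shift, h_neg, nonsing_inv_eq_ringInverse, nonsing_inv_eq_ringInverse]
    exact norm_mul_apply_le (norm_mul_apply_le (norm_map_ofReal_apply_le hC₁)
      (norm_resolvent_apply_le (hA.nonneg_add_algebraMap hc_diag) hρ hs))
      (norm_map_ofReal_apply_le hB₁)
  exact ⟨hunit, hG, fun Δ hΔ => spectralRadius_le_of_norm_apply_le
    (norm_mul_apply_le hG (norm_map_ofReal_apply_le hΔ))⟩
end
end
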